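/- arXiv:2507.19659 — 3 statements merged into one kernel-verified Lean document; each statement's English description precedes it below -/
import Mathlib

section
/- Stochastic dominance by a birth-death chain (Lemma 3): Let A be a finite alphabet with |A| = a ≥ 2, q = a−1, 0 < γmin ≤ γmax, λ ≥ max(γmax, γmin + γmax/q), and let Q̃ be a rate matrix on A^n whose off-diagonal entries vanish when d_H(u,v) > 1, lie in [γmin, γmax] when d_H(u,v) = 1, and whose rows sum to zero; set R̃ = I + Q̃/(nqλ). Let (X_m)_{m≥0} be the Markov chain with transition matrix R̃ started at X₀ = x, and let (Ȳ_m)_{m≥0} be the birth-death Markov chain on {0,...,n} started at Ȳ₀ = 0 with transition matrix B given by B_{i,i−1} = γmax·i/(nqλ), B_{i,i+1} = (γmin/λ)(1 − i/n), B_{i,i} = 1 − B_{i,i−1} − B_{i,i+1}, all other entries 0. Then for every m ≥ 0 and every integer r, P(d_H(X_m, x) ≤ r) ≤ P(Ȳ_m ≤ r); in particular, for any y with d_H(x,y) = r, (R̃^m)_{x,y} ≤ P(Ȳ_m ≤ r). -/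
/-- The birth-death transition matrix `B` on `{0,…,n}` with
`B_{i,i−1} = γmax·i/(nqλ)`, `B_{i,i+1} = (γmin/λ)(1 − i/n)` and
`B_{i,i} = 1 − B_{i,i−1} − B_{i,i+1}`. -/
noncomputable def bdMatrix (n q : ℕ) (γmin γmax lam : ℝ) :
    Matrix (Fin (n + 1)) (Fin (n + 1)) ℝ :=
  Matrix.of fun i j =>
    if (j : ℕ) + 1 = (i : ℕ) then γmax * (i : ℕ) / ((n : ℝ) * q * lam)
    else if (i : ℕ) + 1 = (j : ℕ) then (γmin / lam) * (1 - (i : ℕ) / n)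
    else if i = j then
      1 - γmax * (i : ℕ) / ((n : ℝ) * q * lam) - (γmin / lam) * (1 - (i : ℕ) / n)
    else 0

/-!
From a word `w` at Hamming distance `k` from `x`, one step of `R̃` changes one letter, so the
distance moves by at most one: it drops with probability at most `k γmax / (nqλ)` (only the `k`
letters where `w` differs from `x` can be repaired) and grows with probability at least
`(n - k) q γmin / (nqλ)`. Hence the probability that one step from `w` lands within distance `r`
of `x` is at most the probability `T r k` that one step of `B` from `k` lands in `{0, …, r}`.
The condition `λ ≥ γmin + γmax / q` makes `T r` antitone in `k` (the chain `B` is stochastically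
monotone), and for an antitone test function, summation by parts turns the comparison of
distribution functions at time `m` into the comparison at time `m + 1`.
-/

open Finset Function

lemma eq_add_sum_range_ite_sub {G : Type*} [AddCommGroup G] {T : ℕ → G} {k N : ℕ}
    (hk : k ≤ N) : T k = T N + ∑ r ∈ range N, if k ≤ r then T r - T (r + 1) else 0 := by
  rw [← sum_filter, show (range N).filter (k ≤ ·) = Ico k N by ext; simp; omega,
    sum_Ico_eq_sub _ hk, sum_range_sub', sum_range_sub']
  abel

lemma sum_mul_eq_add_sum_cdf {α R : Type*} [Fintype α] [CommRing R] (p : α → R) (f : α → ℕ)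
    (T : ℕ → R) {N : ℕ} (hf : ∀ a, f a ≤ N) :
    ∑ a, p a * T (f a) =
      T N * ∑ a, p a + ∑ r ∈ range N, (T r - T (r + 1)) * ∑ a with f a ≤ r, p a := by
  calc ∑ a, p a * T (f a)
      = ∑ a, (T N * p a + ∑ r ∈ range N, if f a ≤ r then (T r - T (r + 1)) * p a else 0) := by
        refine sum_congr rfl fun a _ => ?_
        rw [mul_comm, eq_add_sum_range_ite_sub (T := T) (hf a), add_mul, sum_mul]
        simp only [ite_mul, zero_mul]
    _ = _ := by
        rw [sum_add_distrib, sum_comm, ← mul_sum]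
        simp only [sum_filter, mul_sum, mul_ite, mul_zero]

theorem sum_mul_le_sum_mul_of_cdf_le {α β R : Type*} [Fintype α] [Fintype β] [CommRing R]
    [PartialOrder R] [IsOrderedRing R]
    {p : α → R} {q : β → R} {f : α → ℕ} {g : β → ℕ} {T : ℕ → R} {N : ℕ}
    (hf : ∀ a, f a ≤ N) (hg : ∀ b, g b ≤ N) (hT : ∀ k < N, T (k + 1) ≤ T k)
    (hpq : ∑ a, p a = ∑ b, q b)
    (hcdf : ∀ r, ∑ a with f a ≤ r, p a ≤ ∑ b with g b ≤ r, q b) :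
    ∑ a, p a * T (f a) ≤ ∑ b, q b * T (g b) := by
  rw [sum_mul_eq_add_sum_cdf p f T hf, sum_mul_eq_add_sum_cdf q g T hg, hpq]
  gcongr with r hr
  · exact sub_nonneg.2 (hT r (mem_range.1 hr))
  · exact hcdf r

lemma Matrix.sum_mul_apply {l m n R : Type*} [Fintype m] [NonUnitalNonAssocSemiring R]
    (A : Matrix l m R) (B : Matrix m n R) (s : Finset n) (x : l) :
    ∑ z ∈ s, (A * B) x z = ∑ w, A x w * ∑ z ∈ s, B w z := by
  simp only [Matrix.mul_apply, mul_sum]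
  exact sum_comm

lemma Matrix.sum_pow_apply_eq_one {m R : Type*} [Fintype m] [DecidableEq m] [Semiring R]
    {B : Matrix m m R}
    (hB : ∀ i, ∑ j, B i j = 1) (k : ℕ) (i : m) : ∑ j, (B ^ k) i j = 1 := by
  induction k generalizing i with
  | zero => simp [Matrix.one_apply]
  | succ k ih => simp only [pow_succ, Matrix.sum_mul_apply, hB, mul_one, ih]

theorem sum_filter_pow_le_of_stochasticallyMonotone {α : Type*} [Fintype α] [DecidableEq α]
    {N : ℕ} {R : Matrix α α ℝ} {B : Matrix (Fin (N + 1)) (Fin (N + 1)) ℝ}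
    (hR : R ∈ Matrix.rowStochastic ℝ α) (hB : ∀ i, ∑ j, B i j = 1)
    {f : α → ℕ} (hf : ∀ a, f a ≤ N) {T : ℕ → ℕ → ℝ}
    (hBT : ∀ r (i : Fin (N + 1)),
      ∑ j ∈ univ.filter (fun j : Fin (N + 1) => (j : ℕ) ≤ r), B i j = T r i)
    (hT : ∀ r k, k < N → T r (k + 1) ≤ T r k)
    (hstep : ∀ w r, ∑ z ∈ univ.filter (fun z => f z ≤ r), R w z ≤ T r (f w))
    {x : α} (hx : f x = 0) (m r : ℕ) :
    ∑ z ∈ univ.filter (fun z => f z ≤ r), (R ^ m) x z ≤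
      ∑ j ∈ univ.filter (fun j : Fin (N + 1) => (j : ℕ) ≤ r), (B ^ m) 0 j := by
  induction m generalizing r with
  | zero => simp [Matrix.one_apply, hx]
  | succ m ih =>
    have hRm := Submonoid.pow_mem _ hR m
    calc ∑ z ∈ univ.filter (fun z => f z ≤ r), (R ^ (m + 1)) x z
        = ∑ w, (R ^ m) x w * ∑ z ∈ univ.filter (fun z => f z ≤ r), R w z := by
          rw [pow_succ, Matrix.sum_mul_apply]
      _ ≤ ∑ w, (R ^ m) x w * T r (f w) := by
          gcongr with w
          · exact Matrix.nonneg_of_mem_rowStochastic hRm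
          · exact hstep w r
      _ ≤ ∑ i : Fin (N + 1), (B ^ m) 0 i * T r i :=
          sum_mul_le_sum_mul_of_cdf_le hf (fun i => Nat.lt_succ_iff.1 i.isLt) (hT r)
            (by rw [Matrix.sum_row_of_mem_rowStochastic hRm, Matrix.sum_pow_apply_eq_one hB]) ih
      _ = ∑ j ∈ univ.filter (fun j : Fin (N + 1) => (j : ℕ) ≤ r), (B ^ (m + 1)) 0 j := by
          simp only [pow_succ, Matrix.sum_mul_apply, hBT]

section Hamming

variable {ι β : Type*} [Fintype ι] [DecidableEq ι] [DecidableEq β]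

lemma hammingDist_update_add (w x : ι → β) (i : ι) (b : β) :
    hammingDist (update w i b) x + (if w i = x i then 0 else 1) =
      hammingDist w x + (if b = x i then 0 else 1) := by
  simp only [hammingDist, card_filter]
  rw [Fintype.sum_eq_add_sum_compl i,
    Fintype.sum_eq_add_sum_compl i (f := fun j => if w j ≠ x j then 1 else 0)]
  rw [sum_congr rfl fun j hj => by rw [update_of_ne (by simpa using hj)]]
  simp only [update_self, ne_eq, ite_not]
  omega

lemma hammingDist_update_self (w : ι → β) {i : ι} {b : β} (hb : b ≠ w i) :
    hammingDist w (update w i b) = 1 := by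
  have := hammingDist_update_add w w i b
  simp_all [hammingDist_comm w]

lemma exists_eq_update_of_hammingDist_eq_one {w z : ι → β} (h : hammingDist w z = 1) :
    ∃ i, z i ≠ w i ∧ z = update w i (z i) := by
  obtain ⟨i, hi⟩ := card_eq_one.1 h
  have hne : ∀ j, w j ≠ z j ↔ j = i := fun j => by simpa using congr(j ∈ $hi)
  refine ⟨i, fun h => (hne i).2 rfl h.symm, funext fun j => ?_⟩
  by_cases hj : j = i
  · subst hj; simp
  · rw [update_of_ne hj]; by_contra h; exact hj ((hne j).1 (Ne.symm h))

variable [Fintype β]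

lemma card_image_update_sigma (w : ι → β) (s : Finset ι) :
    #((s.sigma fun i => univ.erase (w i)).image fun p => update w p.1 p.2) =
      #s * (Fintype.card β - 1) := by
  rw [card_image_of_injOn, card_sigma, sum_congr rfl fun i _ => card_erase_of_mem (mem_univ _),
    sum_const, smul_eq_mul, card_univ]
  rintro ⟨i, b⟩ hb ⟨j, c⟩ hc heq
  simp only [coe_sigma, Set.mem_sigma_iff, mem_coe, mem_erase] at hb hc
  have hij : i = j := by
    by_contra hij
    have := congr_fun heq i
    simp only [update_self, update_of_ne hij] at this
    exact hb.2.1 this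
  subst hij
  simpa using congr_fun heq i

lemma card_hammingDist_eq_one_le (w : ι → β) :
    #{z | hammingDist w z = 1} ≤ Fintype.card ι * (Fintype.card β - 1) := by
  rw [← card_univ, ← card_image_update_sigma w univ]
  refine card_le_card fun z hz => ?_
  obtain ⟨i, hi, hz⟩ := exists_eq_update_of_hammingDist_eq_one (mem_filter.1 hz).2
  exact mem_image.2 ⟨⟨i, z i⟩, by simpa using hi, hz.symm⟩

lemma card_closer_neighbors_le (w x : ι → β) :
    #{z | hammingDist w z = 1 ∧ hammingDist z x < hammingDist w x} ≤ hammingDist w x := by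
  refine (card_le_card fun z hz => ?_).trans (card_image_le (s := {i | w i ≠ x i})
    (f := fun i => update w i (x i)))
  obtain ⟨h1, hlt⟩ := (mem_filter.1 hz).2
  obtain ⟨i, -, hz⟩ := exists_eq_update_of_hammingDist_eq_one h1
  have hdist := hammingDist_update_add w x i (z i)
  rw [← hz] at hdist
  have hwi : w i ≠ x i := fun h => by split_ifs at hdist <;> omega
  have hzi : z i = x i := by by_contra h; split_ifs at hdist <;> omega
  rw [hzi] at hz
  exact mem_image.2 ⟨i, by simpa using hwi, hz.symm⟩

lemma le_card_farther_neighbors (w x : ι → β) :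
    (Fintype.card ι - hammingDist w x) * (Fintype.card β - 1) ≤
      #{z | hammingDist w z = 1 ∧ hammingDist w x < hammingDist z x} := by
  have hcard : #{i | w i = x i} = Fintype.card ι - hammingDist w x := by
    have := card_filter_add_card_filter_not (s := univ) fun i => w i = x i
    rw [card_univ] at this
    simp only [hammingDist, ne_eq]
    omega
  rw [← hcard, ← card_image_update_sigma w]
  refine card_le_card fun z hz => ?_
  obtain ⟨⟨i, b⟩, hb, rfl⟩ := mem_image.1 hz
  simp only [mem_sigma, mem_filter, mem_univ, true_and, mem_erase] at hb
  have hdist := hammingDist_update_add w x i b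
  rw [if_pos hb.1, if_neg (hb.1 ▸ hb.2.1)] at hdist
  simp only [mem_filter, mem_univ, true_and, hammingDist_update_self w hb.2.1]
  omega

end Hamming

noncomputable def uniformized {m : Type*} [DecidableEq m] (c : ℝ) (Q : Matrix m m ℝ) :
    Matrix m m ℝ :=
  1 + c⁻¹ • Q

section Uniformization

variable {m : Type*} [DecidableEq m] {c : ℝ} {Q : Matrix m m ℝ}

lemma uniformized_apply_of_ne {w z : m} (h : w ≠ z) : uniformized c Q w z = c⁻¹ * Q w z := by
  simp [uniformized, Matrix.one_apply_ne h]

lemma sum_uniformized_apply_of_notMem {w : m} {s : Finset m} (hw : w ∉ s) :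
    ∑ z ∈ s, uniformized c Q w z = c⁻¹ * ∑ z ∈ s, Q w z := by
  rw [mul_sum]
  exact sum_congr rfl fun z hz => uniformized_apply_of_ne (ne_of_mem_of_not_mem hz hw).symm

variable [Fintype m]

lemma uniformized_mem_rowStochastic (hc : 0 < c) (hQ : ∀ w z, w ≠ z → 0 ≤ Q w z)
    (hQdiag : ∀ w, -Q w w ≤ c) (hQsum : ∀ w, ∑ z, Q w z = 0) :
    uniformized c Q ∈ Matrix.rowStochastic ℝ m := by
  refine Matrix.mem_rowStochastic_iff_sum.2 ⟨fun w z => ?_, fun w => ?_⟩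
  · rcases eq_or_ne w z with rfl | h
    · have : -(c⁻¹ * Q w w) ≤ 1 := by
        rw [← mul_neg, inv_mul_le_iff₀ hc, mul_one]; exact hQdiag w
      simp only [uniformized, Matrix.add_apply, Matrix.one_apply_eq, Matrix.smul_apply, smul_eq_mul]
      linarith
    · rw [uniformized_apply_of_ne h]; exact mul_nonneg (inv_nonneg.2 hc.le) (hQ w z h)
  · simp [uniformized, sum_add_distrib, Matrix.one_apply, ← mul_sum, hQsum]

end Uniformization

section HammingRates

variable {ι β : Type*} [Fintype ι] [DecidableEq β] {Q : Matrix (ι → β) (ι → β) ℝ} {γmin γmax : ℝ}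

lemma sum_eq_sum_neighbors
    (hQ2 : ∀ u v : ι → β, u ≠ v → hammingDist u v ≠ 1 → Q u v = 0)
    {w : ι → β} {s : Finset (ι → β)} (hw : w ∉ s) :
    ∑ z ∈ s, Q w z = ∑ z ∈ s with hammingDist w z = 1, Q w z :=
  (sum_filter_of_ne fun z hz hQ =>
    by_contra fun h => hQ (hQ2 w z (ne_of_mem_of_not_mem hz hw).symm h)).symm

lemma sum_le_card_neighbors_mul
    (hQ1 : ∀ u v : ι → β, hammingDist u v = 1 → Q u v ∈ Set.Icc γmin γmax)
    (hQ2 : ∀ u v : ι → β, u ≠ v → hammingDist u v ≠ 1 → Q u v = 0)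
    {w : ι → β} {s : Finset (ι → β)} (hw : w ∉ s) :
    ∑ z ∈ s, Q w z ≤ #{z ∈ s | hammingDist w z = 1} * γmax := by
  rw [sum_eq_sum_neighbors hQ2 hw, ← nsmul_eq_mul]
  exact sum_le_card_nsmul _ _ _ fun z hz => (hQ1 w z (mem_filter.1 hz).2).2

lemma card_neighbors_mul_le_sum
    (hQ1 : ∀ u v : ι → β, hammingDist u v = 1 → Q u v ∈ Set.Icc γmin γmax)
    (hQ2 : ∀ u v : ι → β, u ≠ v → hammingDist u v ≠ 1 → Q u v = 0)
    {w : ι → β} {s : Finset (ι → β)} (hw : w ∉ s) :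
    #{z ∈ s | hammingDist w z = 1} * γmin ≤ ∑ z ∈ s, Q w z := by
  rw [sum_eq_sum_neighbors hQ2 hw, ← nsmul_eq_mul]
  exact card_nsmul_le_sum _ _ _ fun z hz => (hQ1 w z (mem_filter.1 hz).2).1

lemma nonneg_of_hammingRates (hγmin : 0 ≤ γmin)
    (hQ1 : ∀ u v : ι → β, hammingDist u v = 1 → Q u v ∈ Set.Icc γmin γmax)
    (hQ2 : ∀ u v : ι → β, u ≠ v → hammingDist u v ≠ 1 → Q u v = 0)
    {w z : ι → β} (hwz : w ≠ z) : 0 ≤ Q w z := by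
  by_cases h : hammingDist w z = 1
  · exact hγmin.trans (hQ1 w z h).1
  · exact (hQ2 w z hwz h).ge

variable [DecidableEq ι] [Fintype β]

lemma neg_diag_le_of_hammingRates (hγmax : 0 ≤ γmax)
    (hQ1 : ∀ u v : ι → β, hammingDist u v = 1 → Q u v ∈ Set.Icc γmin γmax)
    (hQ2 : ∀ u v : ι → β, u ≠ v → hammingDist u v ≠ 1 → Q u v = 0)
    (hQ3 : ∀ u : ι → β, ∑ v, Q u v = 0) (w : ι → β) :
    -Q w w ≤ (Fintype.card ι * (Fintype.card β - 1) : ℕ) * γmax := by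
  have hdiag : -Q w w = ∑ z ∈ univ.erase w, Q w z := by
    have := hQ3 w
    rw [← add_sum_erase _ _ (mem_univ w)] at this
    linarith
  rw [hdiag]
  refine (sum_le_card_neighbors_mul hQ1 hQ2 (notMem_erase w _)).trans
    (mul_le_mul_of_nonneg_right ?_ hγmax)
  exact_mod_cast (card_le_card (filter_subset_filter _ (subset_univ _))).trans
    (card_hammingDist_eq_one_le w)

end HammingRates

noncomputable def bdDown (n q : ℕ) (γmax lam : ℝ) (k : ℕ) : ℝ := γmax * k / ((n : ℝ) * q * lam)

noncomputable def bdUp (n : ℕ) (γmin lam : ℝ) (k : ℕ) : ℝ := γmin / lam * (1 - (k : ℝ) / n)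

/-- `bdStepCdf n q γmin γmax lam r k` is `P(Ȳ₁ ≤ r | Ȳ₀ = k)` for `k ≤ n`. -/
noncomputable def bdStepCdf (n q : ℕ) (γmin γmax lam : ℝ) (r k : ℕ) : ℝ :=
  if k < r then 1
  else if k = r then 1 - bdUp n γmin lam k
  else if k = r + 1 then bdDown n q γmax lam k
  else 0

section BirthDeath

variable {n q : ℕ} {γmin γmax lam : ℝ}

lemma bdUp_self (hn : n ≠ 0) : bdUp n γmin lam n = 0 := by
  simp [bdUp, div_self (Nat.cast_ne_zero.2 hn : (n : ℝ) ≠ 0)]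

/-- For `i = 0` the truncated `i - 1 = 0` contributes `bdDown n q γmax lam 0 = 0`. -/
lemma bdMatrix_apply (i j : Fin (n + 1)) :
    bdMatrix n q γmin γmax lam i j =
      (if (i : ℕ) - 1 = j then bdDown n q γmax lam i else 0) +
      (if (i : ℕ) + 1 = j then bdUp n γmin lam i else 0) +
      (if (i : ℕ) = j then 1 - bdDown n q γmax lam i - bdUp n γmin lam i else 0) := by
  simp only [bdMatrix, bdDown, bdUp, Matrix.of_apply, Fin.ext_iff]
  split_ifs <;> first
    | (exfalso; omega)
    | (have hi : (i : ℕ) = 0 := by omega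
       simp [hi])
    | ring1

lemma sum_filter_val_le_ite_eq (r c : ℕ) (v : ℝ) :
    ∑ j ∈ univ.filter (fun j : Fin (n + 1) => (j : ℕ) ≤ r), (if c = (j : ℕ) then v else 0) =
      if c ≤ n ∧ c ≤ r then v else 0 := by
  rw [sum_filter, Fin.sum_univ_eq_sum_range (fun j => if j ≤ r then if c = j then v else 0 else 0),
    ← sum_filter, sum_ite_eq]
  simp only [mem_filter, mem_range, Nat.lt_succ_iff]

lemma sum_bdMatrix_filter_le (hn : n ≠ 0) (r : ℕ) (i : Fin (n + 1)) :
    ∑ j ∈ univ.filter (fun j : Fin (n + 1) => (j : ℕ) ≤ r), bdMatrix n q γmin γmax lam i j =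
      bdStepCdf n q γmin γmax lam r i := by
  simp only [bdMatrix_apply, sum_add_distrib, sum_filter_val_le_ite_eq, bdStepCdf]
  have := i.isLt
  split_ifs <;> first
    | (exfalso; omega)
    | ring1
    | (have hi : (i : ℕ) = n := by omega
       rw [hi, bdUp_self hn]; ring)

lemma bdDown_nonneg (hγmax : 0 ≤ γmax) (hlam : 0 ≤ lam) (k : ℕ) : 0 ≤ bdDown n q γmax lam k := by
  unfold bdDown; positivity

lemma bdUp_nonneg (hγmin : 0 ≤ γmin) (hlam : 0 ≤ lam) {k : ℕ} (hk : k ≤ n) :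
    0 ≤ bdUp n γmin lam k :=
  mul_nonneg (by positivity)
    (sub_nonneg.2 (div_le_one_of_le₀ (by exact_mod_cast hk) (by positivity)))

lemma bdDown_add_bdUp_le_one (hγmin : 0 ≤ γmin) (hγmax : 0 ≤ γmax) (hlam : γmin + γmax / q ≤ lam)
    (hlam0 : 0 < lam) {k : ℕ} (hk : k ≤ n) (t : ℕ) :
    bdDown n q γmax lam k + bdUp n γmin lam t ≤ 1 := by
  have hdown : bdDown n q γmax lam k ≤ γmax / q / lam := by
    calc bdDown n q γmax lam k = γmax / q / lam * (k / n) := by unfold bdDown; ring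
      _ ≤ γmax / q / lam * 1 := by
        gcongr; exact div_le_one_of_le₀ (by exact_mod_cast hk) (by positivity)
      _ = γmax / q / lam := mul_one _
  have hup : bdUp n γmin lam t ≤ γmin / lam :=
    mul_le_of_le_one_right (by positivity) (by simp only [sub_le_self_iff]; positivity)
  calc bdDown n q γmax lam k + bdUp n γmin lam t ≤ (γmin + γmax / q) / lam := by
        rw [add_div]; linarith
    _ ≤ 1 := (div_le_one hlam0).2 hlam

lemma sum_bdMatrix_row (hn : n ≠ 0) (i : Fin (n + 1)) :
    ∑ j, bdMatrix n q γmin γmax lam i j = 1 := by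
  have hsum := sum_bdMatrix_filter_le (q := q) (γmin := γmin) (γmax := γmax) (lam := lam) hn n i
  rw [filter_true_of_mem fun j _ => Nat.lt_succ_iff.1 j.isLt] at hsum
  have := i.isLt
  rw [hsum, bdStepCdf]
  split_ifs with h1 h2
  · rfl
  · rw [h2, bdUp_self hn, sub_zero]
  all_goals omega

lemma bdStepCdf_succ_le (hγmin : 0 < γmin) (hγmax : 0 ≤ γmax) (hlam : γmin + γmax / q ≤ lam)
    (r : ℕ) {k : ℕ} (hk : k + 1 ≤ n) :
    bdStepCdf n q γmin γmax lam r (k + 1) ≤ bdStepCdf n q γmin γmax lam r k := by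
  have hlam0 : 0 < lam := (add_pos_of_pos_of_nonneg hγmin (by positivity)).trans_le hlam
  have := bdDown_add_bdUp_le_one hγmin.le hγmax hlam hlam0 hk k
  have := bdDown_nonneg (n := n) (q := q) hγmax hlam0.le k
  have := bdUp_nonneg (γmin := γmin) hγmin.le hlam0.le hk
  unfold bdStepCdf
  split_ifs <;> first | (exfalso; omega) | linarith

end BirthDeath

section OneStep

variable {n a : ℕ} {γmin γmax lam : ℝ} {Q : Matrix (Fin n → Fin a) (Fin n → Fin a) ℝ}

lemma sum_uniformized_closer_le_bdDown (hlam : 0 ≤ lam) (hγmax : 0 ≤ γmax)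
    (hQ1 : ∀ u v : Fin n → Fin a, hammingDist u v = 1 → Q u v ∈ Set.Icc γmin γmax)
    (hQ2 : ∀ u v : Fin n → Fin a, u ≠ v → hammingDist u v ≠ 1 → Q u v = 0)
    (x w : Fin n → Fin a) :
    ∑ z ∈ univ.filter (fun z => hammingDist z x < hammingDist w x),
        uniformized ((n : ℝ) * ((a - 1 : ℕ) : ℝ) * lam) Q w z ≤
      bdDown n (a - 1) γmax lam (hammingDist w x) := by
  have hw : w ∉ univ.filter (fun z => hammingDist z x < hammingDist w x) := by simp
  rw [sum_uniformized_apply_of_notMem hw, bdDown, div_eq_inv_mul, mul_comm γmax]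
  gcongr
  refine (sum_le_card_neighbors_mul hQ1 hQ2 hw).trans ?_
  gcongr
  refine (card_le_card fun z hz => ?_).trans (card_closer_neighbors_le w x)
  simp only [mem_filter, mem_univ, true_and] at hz ⊢
  exact hz.symm

lemma bdUp_le_sum_uniformized_farther (hn : n ≠ 0) (ha : 2 ≤ a) (hlam : 0 < lam)
    (hγmin : 0 ≤ γmin)
    (hQ1 : ∀ u v : Fin n → Fin a, hammingDist u v = 1 → Q u v ∈ Set.Icc γmin γmax)
    (hQ2 : ∀ u v : Fin n → Fin a, u ≠ v → hammingDist u v ≠ 1 → Q u v = 0)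
    (x w : Fin n → Fin a) :
    bdUp n γmin lam (hammingDist w x) ≤
      ∑ z ∈ univ.filter (fun z => hammingDist w x < hammingDist z x),
        uniformized ((n : ℝ) * ((a - 1 : ℕ) : ℝ) * lam) Q w z := by
  have hw : w ∉ univ.filter (fun z => hammingDist w x < hammingDist z x) := by simp
  have hkn : hammingDist w x ≤ n := by simpa using hammingDist_le_card_fintype (x := w) (y := x)
  have hn' : (0 : ℝ) < n := by exact_mod_cast Nat.pos_of_ne_zero hn
  have hq : (0 : ℝ) < (a - 1 : ℕ) := by exact_mod_cast (by omega : 0 < a - 1)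
  rw [sum_uniformized_apply_of_notMem hw]
  calc bdUp n γmin lam (hammingDist w x)
      = ((n : ℝ) * ((a - 1 : ℕ) : ℝ) * lam)⁻¹ *
          (((n - hammingDist w x) * (a - 1) : ℕ) * γmin) := by
        rw [bdUp, Nat.cast_mul, Nat.cast_sub hkn]
        field_simp
    _ ≤ _ := by
        gcongr
        refine le_trans ?_ (card_neighbors_mul_le_sum hQ1 hQ2 hw)
        gcongr
        refine le_of_le_of_eq (by simpa using le_card_farther_neighbors w x) (congr_arg card ?_)
        ext z
        simp only [mem_filter, mem_univ, true_and, and_comm]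

lemma sum_filter_hammingDist_le_bdStepCdf (hn : n ≠ 0) (ha : 2 ≤ a) (hlam : 0 < lam)
    (hγmin : 0 ≤ γmin) (hγmax : 0 ≤ γmax)
    (hR : uniformized ((n : ℝ) * ((a - 1 : ℕ) : ℝ) * lam) Q ∈
      Matrix.rowStochastic ℝ (Fin n → Fin a))
    (hQ1 : ∀ u v : Fin n → Fin a, hammingDist u v = 1 → Q u v ∈ Set.Icc γmin γmax)
    (hQ2 : ∀ u v : Fin n → Fin a, u ≠ v → hammingDist u v ≠ 1 → Q u v = 0)
    (x w : Fin n → Fin a) (r : ℕ) :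
    ∑ z ∈ univ.filter (fun z => hammingDist z x ≤ r),
        uniformized ((n : ℝ) * ((a - 1 : ℕ) : ℝ) * lam) Q w z ≤
      bdStepCdf n (a - 1) γmin γmax lam r (hammingDist w x) := by
  unfold bdStepCdf
  split_ifs with h1 h2 h3
  · exact (sum_le_sum_of_subset_of_nonneg (filter_subset _ _) fun z _ _ =>
      Matrix.nonneg_of_mem_rowStochastic hR).trans_eq (Matrix.sum_row_of_mem_rowStochastic hR w)
  · subst h2
    have hsplit := sum_filter_add_sum_filter_not univ (fun z => hammingDist z x ≤ hammingDist w x)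
      (uniformized ((n : ℝ) * ((a - 1 : ℕ) : ℝ) * lam) Q w)
    simp only [Matrix.sum_row_of_mem_rowStochastic hR w, not_le] at hsplit
    linarith [bdUp_le_sum_uniformized_farther hn ha hlam hγmin hQ1 hQ2 x w]
  · rw [filter_congr fun z _ => show hammingDist z x ≤ r ↔ hammingDist z x < hammingDist w x by
      omega]
    exact sum_uniformized_closer_le_bdDown hlam.le hγmax hQ1 hQ2 x w
  · refine (sum_eq_zero fun z hz => ?_).le
    have hzx := (mem_filter.1 hz).2
    have := hammingDist_triangle w z x
    rw [uniformized_apply_of_ne (by rintro rfl; omega), hQ2 w z (by rintro rfl; omega) (by omega),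
      mul_zero]

end OneStep

/-- **Stochastic dominance by a birth-death chain (Lemma 3).**
For the chain `X` with transition matrix `R̃ = I + Q̃/(nqλ)` started at `x`, and the
birth-death chain `Ȳ` started at `0`, one has `P(d_H(X_m,x) ≤ r) ≤ P(Ȳ_m ≤ r)`;
in particular `(R̃^m)_{x,y} ≤ P(Ȳ_m ≤ r)` whenever `d_H(x,y) = r`. -/
theorem stochastic_dominance_birth_death
    (a n : ℕ) (ha : 2 ≤ a) (hn : 1 ≤ n)
    (γmin γmax lam : ℝ)
    (hγmin : 0 < γmin) (hγ : γmin ≤ γmax)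
    (hlam : max γmax (γmin + γmax / (((a - 1 : ℕ)) : ℝ)) ≤ lam)
    (Q : Matrix (Fin n → Fin a) (Fin n → Fin a) ℝ)
    (hQ1 : ∀ u v : Fin n → Fin a, hammingDist u v = 1 → Q u v ∈ Set.Icc γmin γmax)
    (hQ2 : ∀ u v : Fin n → Fin a, u ≠ v → hammingDist u v ≠ 1 → Q u v = 0)
    (hQ3 : ∀ u : Fin n → Fin a, ∑ v, Q u v = 0)
    (x : Fin n → Fin a) (m r : ℕ) :
    ((∑ z ∈ Finset.univ.filter (fun z : Fin n → Fin a => hammingDist z x ≤ r),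
        ((1 + (((n : ℝ) * ((a - 1 : ℕ) : ℝ) * lam))⁻¹ • Q) ^ m) x z)
      ≤ ∑ j ∈ Finset.univ.filter (fun j : Fin (n + 1) => (j : ℕ) ≤ r),
          ((bdMatrix n (a - 1) γmin γmax lam) ^ m) 0 j)
    ∧ (∀ y : Fin n → Fin a, hammingDist x y = r →
        ((1 + (((n : ℝ) * ((a - 1 : ℕ) : ℝ) * lam))⁻¹ • Q) ^ m) x y
          ≤ ∑ j ∈ Finset.univ.filter (fun j : Fin (n + 1) => (j : ℕ) ≤ r),
              ((bdMatrix n (a - 1) γmin γmax lam) ^ m) 0 j) := by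
  obtain ⟨hl1, hl2⟩ := max_le_iff.1 hlam
  have hn0 : n ≠ 0 := by omega
  have hγmax : 0 ≤ γmax := hγmin.le.trans hγ
  have hlam0 : 0 < lam := hγmin.trans_le (hγ.trans hl1)
  have hR : uniformized ((n : ℝ) * ((a - 1 : ℕ) : ℝ) * lam) Q ∈
      Matrix.rowStochastic ℝ (Fin n → Fin a) := by
    have hc : (0 : ℝ) < n * (a - 1 : ℕ) * lam :=
      mul_pos (mul_pos (Nat.cast_pos.2 (by omega)) (Nat.cast_pos.2 (by omega))) hlam0
    refine uniformized_mem_rowStochastic hc (fun w z => nonneg_of_hammingRates hγmin.le hQ1 hQ2)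
      (fun w => (neg_diag_le_of_hammingRates hγmax hQ1 hQ2 hQ3 w).trans ?_) hQ3
    simp only [Fintype.card_fin, Nat.cast_mul]
    gcongr
  have hdom := sum_filter_pow_le_of_stochasticallyMonotone hR (sum_bdMatrix_row hn0)
    (fun w => by simpa using hammingDist_le_card_fintype (x := w) (y := x))
    (sum_bdMatrix_filter_le hn0) (fun r k hk => bdStepCdf_succ_le hγmin hγmax hl2 r hk)
    (fun w r => sum_filter_hammingDist_le_bdStepCdf hn0 ha hlam0 hγmin.le hγmax hR hQ1 hQ2 x w r)
    (hammingDist_self x) m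
  have hnonneg : ∀ z, 0 ≤ (uniformized ((n : ℝ) * ((a - 1 : ℕ) : ℝ) * lam) Q ^ m) x z :=
    fun z => Matrix.nonneg_of_mem_rowStochastic (Submonoid.pow_mem _ hR m)
  refine ⟨hdom r, fun y hy => (single_le_sum (fun z _ => hnonneg z) ?_).trans (hdom r)⟩
  simp [hammingDist_comm, hy]
end

section
/- Return probability bound after hitting r★ (Lemma 7): Fix integers n ≥ 1, q ≥ 1 and reals 0 < γmin ≤ γmax, λ ≥ max(γmax, γmin + γmax/q). Let (Ȳ_m) be the birth-death Markov chain on {0,...,n} with transition matrix B given by B_{i,i−1} = γmax·i/(nqλ), B_{i,i+1} = (γmin/λ)(1 − i/n), B_{i,i} = 1 − B_{i,i−1} − B_{i,i+1}, started at Ȳ₀ = 0. Suppose 0 < δ ≤ q/(q + e·γ★) with γ★ := γmax/γmin, set r★ := ⌊nδ⌋ (with nδ ≥ 1), let r be an integer with 0 ≤ r ≤ ⌊nδ⌋/2, and let τ_{r★} := inf{m : Ȳ_m = r★}. Then for every m ≥ 0, P(Ȳ_m ≤ r and τ_{r★} ≤ m) ≤ m² · exp(−nδ/2 + 1). -/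
/-- `P(Ȳ_m ≤ r ∧ τ_s ≤ m)` for the Markov chain with transition matrix `B` started
at `0`: the probability that at time `m` the chain is at a state `≤ r` and it has
visited the state `s` at some time in `0,…,m`, written as a sum over paths of the
product of one-step transition probabilities. -/
noncomputable def hitAndLowProb {n : ℕ} (B : Matrix (Fin (n + 1)) (Fin (n + 1)) ℝ)
    (s r m : ℕ) : ℝ :=
  ∑ ω : Fin (m + 1) → Fin (n + 1),
    if ω 0 = 0 ∧ (ω (Fin.last m) : ℕ) ≤ r ∧ ∃ i, (ω i : ℕ) = s then
      ∏ i : Fin m, B (ω i.castSucc) (ω i.succ)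
    else 0

/-!
Split the event according to the last time `k < m` at which the chain visits `s = ⌊nδ⌋`; the
union bound over `k` costs a factor `m ≤ m²`. After time `k` the path avoids `s`, hence (moving by
steps of at most one) stays below `s` until it ends at or below `r`. Since `δ ≤ q / (q + e γ★)`,
below `s` the chain steps up at least `e` times as often as it steps down, so `i ↦ exp (r - i)`,
killed at `s`, is a supermartingale there; it starts at `exp (r - s)` and is `≥ 1` at the end,
which bounds each term by `exp (r - s) ≤ exp (-nδ/2 + 1)`.
-/

open Finset Real

namespace PathSum

variable {ι : Type*} (B : Matrix ι ι ℝ)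

def pathWeight {t : ℕ} (ω : Fin (t + 1) → ι) : ℝ :=
  ∏ i : Fin t, B (ω i.castSucc) (ω i.succ)

variable {B}

lemma pathWeight_nonneg (hB : ∀ x y, 0 ≤ B x y) {t : ℕ} (ω : Fin (t + 1) → ι) :
    0 ≤ pathWeight B ω :=
  prod_nonneg fun _ _ => hB _ _

lemma pathWeight_snoc {t : ℕ} (ω : Fin (t + 1) → ι) (y : ι) :
    pathWeight B (Fin.snoc ω y : Fin (t + 2) → ι) = pathWeight B ω * B (ω (Fin.last t)) y := by
  simp only [pathWeight, Fin.prod_univ_castSucc, Fin.succ_castSucc, Fin.snoc_castSucc,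
    Fin.succ_last, Fin.snoc_last]

variable [Fintype ι]

lemma sum_eq_sum_sum_snoc {M : Type*} [AddCommMonoid M] {t : ℕ} (f : (Fin (t + 2) → ι) → M) :
    ∑ ω, f ω = ∑ ω : Fin (t + 1) → ι, ∑ y, f (Fin.snoc ω y) := by
  rw [← (Fin.snocEquiv fun _ => ι).sum_comp, Fintype.sum_prod_type, sum_comm]
  rfl

variable (B) (S : ℕ → ι → Prop) [∀ j, DecidablePred (S j)] (G : ℕ → ι → ℝ)

def killedPotential (t : ℕ) : ℝ :=
  ∑ ω : Fin (t + 1) → ι,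
    if ∀ j : Fin (t + 1), S j (ω j) then pathWeight B ω * G t (ω (Fin.last t)) else 0

variable {S G}

lemma killedPotential_succ_le (hB : ∀ x y, 0 ≤ B x y) {t : ℕ}
    (hG : ∀ x, S t x → ∑ y, B x y * (if S (t + 1) y then G (t + 1) y else 0) ≤ G t x) :
    killedPotential B S G (t + 1) ≤ killedPotential B S G t := by
  rw [killedPotential, sum_eq_sum_sum_snoc, killedPotential]
  refine sum_le_sum fun ω _ => ?_
  simp only [Fin.forall_fin_succ' (n := t + 1), Fin.snoc_castSucc, Fin.snoc_last, Fin.val_last,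
    Fin.val_castSucc, pathWeight_snoc]
  by_cases hω : ∀ j : Fin (t + 1), S j (ω j)
  · have hlast : S t (ω (Fin.last t)) := by simpa using hω (Fin.last t)
    simp only [hω, implies_true, true_and, if_true]
    calc ∑ y, (if S (t + 1) y then pathWeight B ω * B (ω (Fin.last t)) y * G (t + 1) y else 0)
        = pathWeight B ω
            * ∑ y, B (ω (Fin.last t)) y * (if S (t + 1) y then G (t + 1) y else 0) := by
          rw [mul_sum]; congr 1; ext y; split_ifs <;> ring
      _ ≤ pathWeight B ω * G t (ω (Fin.last t)) :=
          mul_le_mul_of_nonneg_left (hG _ hlast) (pathWeight_nonneg hB ω)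
  · simp [hω]

lemma killedPotential_le_killedPotential_zero (hB : ∀ x y, 0 ≤ B x y) {t : ℕ}
    (hG : ∀ j < t, ∀ x, S j x → ∑ y, B x y * (if S (j + 1) y then G (j + 1) y else 0) ≤ G j x) :
    ∀ j ≤ t, killedPotential B S G j ≤ killedPotential B S G 0
  | 0, _ => le_rfl
  | j + 1, hj => (killedPotential_succ_le B hB (hG j hj)).trans
      (killedPotential_le_killedPotential_zero hB hG j (by omega))

theorem sum_pathWeight_le_of_superharmonic (hB : ∀ x y, 0 ≤ B x y) {t : ℕ} {x₀ : ι}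
    (hS₀ : ∀ x, S 0 x → x = x₀) (hG₀ : 0 ≤ G 0 x₀)
    (hG : ∀ j < t, ∀ x, S j x → ∑ y, B x y * (if S (j + 1) y then G (j + 1) y else 0) ≤ G j x)
    (hGt : ∀ x, S t x → 1 ≤ G t x) :
    ∑ ω : Fin (t + 1) → ι, (if ∀ j : Fin (t + 1), S j (ω j) then pathWeight B ω else 0)
      ≤ G 0 x₀ := by
  calc _ ≤ killedPotential B S G t := by
        refine sum_le_sum fun ω _ => ?_
        split_ifs with hω
        · exact le_mul_of_one_le_right (pathWeight_nonneg hB ω)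
            (hGt _ (by simpa using hω (Fin.last t)))
        · rfl
    _ ≤ killedPotential B S G 0 := killedPotential_le_killedPotential_zero B hB hG t le_rfl
    _ = if S 0 x₀ then G 0 x₀ else 0 := by
        rw [killedPotential, sum_eq_single (fun _ => x₀)]
        · simp [pathWeight]
        · intro ω _ hω
          have : ¬ S 0 (ω 0) := fun h => hω (funext fun j => by rw [Fin.fin_one_eq_zero j, hS₀ _ h])
          simp [Fin.forall_fin_one, this]
        · simp
    _ ≤ G 0 x₀ := by split_ifs <;> simp [hG₀]

end PathSum

section BirthDeath

lemma sum_fin_ite_val_eq_le {n a : ℕ} {f : ℕ → ℝ} (hf : 0 ≤ f a) :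
    ∑ y : Fin n, (if (y : ℕ) = a then f y else 0) ≤ f a := by
  rw [Fin.sum_univ_eq_sum_range (fun y => if y = a then f y else 0), sum_ite_eq']
  split_ifs <;> simp [hf]

def birthDeathMatrix (n : ℕ) (d u : ℕ → ℝ) : Matrix (Fin (n + 1)) (Fin (n + 1)) ℝ :=
  Matrix.of fun i j =>
    if (j : ℕ) + 1 = (i : ℕ) then d i
    else if (i : ℕ) + 1 = (j : ℕ) then u i
    else if i = j then 1 - d i - u i
    else 0

variable {n : ℕ} {d u : ℕ → ℝ}

lemma birthDeathMatrix_nonneg (hrates : ∀ i ≤ n, 0 ≤ d i ∧ 0 ≤ u i ∧ d i + u i ≤ 1)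
    (x y : Fin (n + 1)) : 0 ≤ birthDeathMatrix n d u x y := by
  obtain ⟨hd, hu, hdu⟩ := hrates x (Nat.lt_succ_iff.mp x.isLt)
  simp only [birthDeathMatrix, Matrix.of_apply]
  split_ifs <;> linarith

lemma sum_birthDeathMatrix_mul_le (hrates : ∀ i ≤ n, 0 ≤ d i ∧ 0 ≤ u i ∧ d i + u i ≤ 1)
    {f : ℕ → ℝ} (hf : ∀ i, 0 ≤ f i) (x : Fin (n + 1)) :
    ∑ y, birthDeathMatrix n d u x y * f y
      ≤ d x * f (x - 1) + (1 - d x - u x) * f x + u x * f (x + 1) := by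
  obtain ⟨hd, hu, hdu⟩ := hrates x (Nat.lt_succ_iff.mp x.isLt)
  have hpoint : ∀ y : Fin (n + 1), birthDeathMatrix n d u x y * f y
      ≤ (if (y : ℕ) = x - 1 then d x * f y else 0)
        + (if (y : ℕ) = x then (1 - d x - u x) * f y else 0)
        + (if (y : ℕ) = x + 1 then u x * f y else 0) := by
    intro y
    have := hf y
    simp only [birthDeathMatrix, Matrix.of_apply, Fin.ext_iff]
    split_ifs <;> first | omega | nlinarith
  refine (sum_le_sum fun y _ => hpoint y).trans ?_
  simp only [sum_add_distrib]
  gcongr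
  · exact sum_fin_ite_val_eq_le (f := fun y => d x * f y) (mul_nonneg hd (hf _))
  · exact sum_fin_ite_val_eq_le (f := fun y => (1 - d x - u x) * f y)
      (mul_nonneg (by linarith) (hf _))
  · exact sum_fin_ite_val_eq_le (f := fun y => u x * f y) (mul_nonneg hu (hf _))

noncomputable def expBelow (s : ℕ) (a : ℝ) (i : ℕ) : ℝ := if i < s then exp (a - i) else 0

lemma expBelow_nonneg (s : ℕ) (a : ℝ) (i : ℕ) : 0 ≤ expBelow s a i := by
  unfold expBelow; positivity

lemma expBelow_le (s : ℕ) (a : ℝ) (i : ℕ) : expBelow s a i ≤ exp (a - i) := by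
  unfold expBelow
  split_ifs
  · rfl
  · positivity

/-- At `x = s` the bound is the unkilled value `exp (a - s)`; at every other `x` it is
`expBelow s a x`. -/
lemma sum_birthDeathMatrix_mul_expBelow_le (hrates : ∀ i ≤ n, 0 ≤ d i ∧ 0 ≤ u i ∧ d i + u i ≤ 1)
    {s : ℕ} (hdrift : ∀ i ≤ s, exp 1 * d i ≤ u i) (a : ℝ) (x : Fin (n + 1)) :
    ∑ y, birthDeathMatrix n d u x y * expBelow s a y ≤ if (x : ℕ) ≤ s then exp (a - x) else 0 := by
  refine (sum_birthDeathMatrix_mul_le hrates (expBelow_nonneg s a) x).trans ?_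
  obtain ⟨hd, hu, hdu⟩ := hrates x (Nat.lt_succ_iff.mp x.isLt)
  split_ifs with hxs
  · have hdown : expBelow s a (x - 1) ≤ exp 1 * exp (a - x) := by
      rw [← exp_add]
      refine (expBelow_le s a _).trans (exp_le_exp.mpr ?_)
      have : (x : ℝ) ≤ ((x - 1 : ℕ) : ℝ) + 1 := by norm_cast; omega
      linarith
    have hup : expBelow s a (x + 1) ≤ exp (a - x) * exp (-1) := by
      rw [← exp_add]
      refine (expBelow_le s a _).trans (exp_le_exp.mpr ?_)
      push_cast; linarith
    have hkey := hdrift x hxs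
    have he : exp 1 * exp (-1) = 1 := by rw [← exp_add]; simp
    have hE := exp_pos (a - x)
    calc d x * expBelow s a (x - 1) + (1 - d x - u x) * expBelow s a x + u x * expBelow s a (x + 1)
        ≤ d x * (exp 1 * exp (a - x)) + (1 - d x - u x) * exp (a - x)
          + u x * (exp (a - x) * exp (-1)) := by
          gcongr
          · linarith
          · exact expBelow_le s a x
      _ = exp (a - x) * (1 - (exp 1 - 1) * exp (-1) * (u x - exp 1 * d x)) := by
          linear_combination exp (a - x) * (d x + u x - exp 1 * d x) * he
      _ ≤ exp (a - x) := by
          have : 0 ≤ (exp 1 - 1) * exp (-1) * (u x - exp 1 * d x) :=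
            mul_nonneg (mul_nonneg (by linarith [add_one_le_exp 1]) (exp_pos _).le) (by linarith)
          nlinarith
  · have hzero : ∀ i, s ≤ i → expBelow s a i = 0 := fun i hi => if_neg (by omega)
    rw [hzero _ (by omega), hzero _ (by omega), hzero _ (by omega)]
    simp

end BirthDeath

section LastVisit

/-- A path `ω` satisfies `lastVisitConstraint s r k m j (ω j)` for all `j ≤ m` iff it starts at `0`,
visits `s` for the last time at time `k`, and ends at or below `r`. -/
def lastVisitConstraint (s r k m j x : ℕ) : Prop :=
  (j = 0 → x = 0) ∧ (j = k → x = s) ∧ (k < j → x ≠ s) ∧ (j = m → x ≤ r)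

instance (s r k m j : ℕ) : DecidablePred (lastVisitConstraint s r k m j) := fun _ => by
  unfold lastVisitConstraint; infer_instance

lemma exists_lastVisitConstraint {m r s : ℕ} {ω : Fin (m + 1) → ℕ} (hrs : r < s) (h0 : ω 0 = 0)
    (hlast : ω (Fin.last m) ≤ r) (hvisit : ∃ i, ω i = s) :
    ∃ k : Fin m, ∀ j : Fin (m + 1), lastVisitConstraint s r k m j (ω j) := by
  set K := univ.filter fun i => ω i = s
  have hK : K.Nonempty := by simpa [K, Finset.Nonempty] using hvisit
  have hmax : ω (K.max' hK) = s := (mem_filter.mp (K.max'_mem hK)).2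
  obtain ⟨k, hk⟩ := Fin.exists_castSucc_eq.mpr fun h : K.max' hK = Fin.last m => by
    rw [h] at hmax; omega
  refine ⟨k, fun j => ⟨fun hj => ?_, fun hj => ?_, fun hj hjs => ?_, fun hj => ?_⟩⟩
  · rwa [show j = 0 from Fin.ext hj]
  · rwa [show j = K.max' hK by rw [← hk]; exact Fin.ext hj]
  · have := K.le_max' j (mem_filter.mpr ⟨mem_univ _, hjs⟩)
    rw [← hk, Fin.le_def] at this
    simp only [Fin.val_castSucc] at this
    omega
  · rwa [show j = Fin.last m from Fin.ext hj]

variable {n : ℕ} {d u : ℕ → ℝ}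

lemma sum_pathWeight_lastVisitConstraint_le
    (hrates : ∀ i ≤ n, 0 ≤ d i ∧ 0 ≤ u i ∧ d i + u i ≤ 1) {r s : ℕ}
    (hdrift : ∀ i ≤ s, exp 1 * d i ≤ u i) (hrs : r < s) {m k : ℕ} (hkm : k < m) :
    ∑ ω : Fin (m + 1) → Fin (n + 1),
      (if ∀ j : Fin (m + 1), lastVisitConstraint s r k m j (ω j)
        then PathSum.pathWeight (birthDeathMatrix n d u) ω else 0)
      ≤ exp ((r : ℝ) - s) := by
  set B := birthDeathMatrix n d u
  have hB := birthDeathMatrix_nonneg hrates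
  set G : ℕ → Fin (n + 1) → ℝ := fun j x => if j ≤ k then exp ((r : ℝ) - s) else expBelow s r x
  have hG0 : ∀ j x, 0 ≤ G j x := fun j x => by
    simp only [G]
    split_ifs
    · positivity
    · exact expBelow_nonneg _ _ _
  have hconst : ∀ x, ∑ y, B x y * exp ((r : ℝ) - s) ≤ exp ((r : ℝ) - s) := fun x => by
    have := sum_birthDeathMatrix_mul_le hrates (f := fun _ => exp ((r : ℝ) - s))
      (fun _ => (exp_pos _).le) x
    linarith
  have hpot := sum_birthDeathMatrix_mul_expBelow_le hrates hdrift (r : ℝ)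
  refine PathSum.sum_pathWeight_le_of_superharmonic B hB (G := G) (x₀ := 0)
    (S := fun j (x : Fin (n + 1)) => lastVisitConstraint s r k m j x)
    (fun x hx => Fin.ext (hx.1 rfl)) (hG0 0 0) (fun j _ x hx => ?_) (fun x hx => ?_) |>.trans ?_
  · have hdrop : ∀ y : Fin (n + 1),
        (if lastVisitConstraint s r k m (j + 1) y then G (j + 1) y else 0) ≤ G (j + 1) y :=
      fun y => by split_ifs <;> simp [hG0]
    refine (sum_le_sum fun y _ => mul_le_mul_of_nonneg_left (hdrop y) (hB x y)).trans ?_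
    obtain ⟨-, hk, hafter, -⟩ := hx
    rcases lt_trichotomy j k with hjk | rfl | hjk
    · simpa [G, Nat.succ_le_of_lt hjk, hjk.le] using hconst x
    · simpa [G, hk rfl] using hpot x
    · simpa [G, hjk.not_ge, (hjk.trans (Nat.lt_succ_self j)).not_ge, expBelow,
        lt_iff_le_and_ne, hafter hjk] using hpot x
  · have hxr : (x : ℕ) ≤ r := hx.2.2.2 rfl
    simp only [G, hkm.not_ge, if_false, expBelow, show (x : ℕ) < s by omega, if_true]
    exact one_le_exp (sub_nonneg.mpr (by exact_mod_cast hxr))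
  · simp [G]

end LastVisit

lemma hitAndLowProb_le_sum_lastVisitConstraint {n : ℕ} {B : Matrix (Fin (n + 1)) (Fin (n + 1)) ℝ}
    (hB : ∀ x y, 0 ≤ B x y) {r s : ℕ} (hrs : r < s) (m : ℕ) :
    hitAndLowProb B s r m
      ≤ ∑ k : Fin m, ∑ ω : Fin (m + 1) → Fin (n + 1),
          if ∀ j : Fin (m + 1), lastVisitConstraint s r k m j (ω j)
          then PathSum.pathWeight B ω else 0 := by
  rw [hitAndLowProb, sum_comm]
  refine sum_le_sum fun ω _ => ?_
  have hterm : ∀ k : Fin m, 0 ≤ if ∀ j : Fin (m + 1), lastVisitConstraint s r k m j (ω j)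
      then PathSum.pathWeight B ω else 0 := fun k => by
    split_ifs
    · exact PathSum.pathWeight_nonneg hB ω
    · rfl
  split_ifs with hω
  · obtain ⟨h0, hlast, hvisit⟩ := hω
    obtain ⟨k, hk⟩ := exists_lastVisitConstraint (ω := fun j => (ω j : ℕ)) hrs (by simp [h0])
      hlast hvisit
    exact (if_pos hk).symm.le.trans (single_le_sum (fun k _ => hterm k) (mem_univ k))
  · exact sum_nonneg fun k _ => hterm k

theorem hitAndLowProb_birthDeathMatrix_le {n : ℕ} {d u : ℕ → ℝ}
    (hrates : ∀ i ≤ n, 0 ≤ d i ∧ 0 ≤ u i ∧ d i + u i ≤ 1) {r s : ℕ}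
    (hdrift : ∀ i ≤ s, exp 1 * d i ≤ u i) (hrs : r < s) (m : ℕ) :
    hitAndLowProb (birthDeathMatrix n d u) s r m ≤ m * exp ((r : ℝ) - s) :=
  calc hitAndLowProb (birthDeathMatrix n d u) s r m
      ≤ ∑ k : Fin m, ∑ ω : Fin (m + 1) → Fin (n + 1),
          if ∀ j : Fin (m + 1), lastVisitConstraint s r k m j (ω j)
          then PathSum.pathWeight (birthDeathMatrix n d u) ω else 0 :=
        hitAndLowProb_le_sum_lastVisitConstraint (birthDeathMatrix_nonneg hrates) hrs m
    _ ≤ ∑ _k : Fin m, exp ((r : ℝ) - s) :=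
        sum_le_sum fun k _ => sum_pathWeight_lastVisitConstraint_le hrates hdrift hrs k.isLt
    _ = m * exp ((r : ℝ) - s) := by simp

section Parameters

variable {n q : ℕ} {γmin γmax lam : ℝ}

lemma bdMatrix_eq_birthDeathMatrix :
    bdMatrix n q γmin γmax lam = birthDeathMatrix n (fun i => γmax * i / (n * q * lam))
      (fun i => γmin / lam * (1 - i / n)) := rfl

lemma bdMatrix_rates (hγmin : 0 ≤ γmin) (hγmax : 0 ≤ γmax) (hlam0 : 0 < lam)
    (hlam : γmin + γmax / q ≤ lam) :
    ∀ i ≤ n, 0 ≤ γmax * i / (n * q * lam) ∧ 0 ≤ γmin / lam * (1 - i / n)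
      ∧ γmax * i / (n * q * lam) + γmin / lam * (1 - i / n) ≤ 1 := by
  intro i hi
  have ht0 : (0 : ℝ) ≤ i / n := by positivity
  have ht1 : (i : ℝ) / n ≤ 1 := div_le_one_of_le₀ (by exact_mod_cast hi) (by positivity)
  have hdown : γmax * i / (n * q * lam) = γmax / q / lam * (i / n) := by ring
  have hsum : γmax / q / lam + γmin / lam ≤ 1 := by
    rw [← add_div, div_le_one hlam0]; linarith
  have : 0 ≤ γmax / q / lam := by positivity
  have : 0 ≤ γmin / lam := by positivity
  rw [hdown]
  refine ⟨by positivity, mul_nonneg (by positivity) (by linarith), ?_⟩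
  nlinarith

lemma bdMatrix_drift (hn : 1 ≤ n) (hq : 1 ≤ q) (hγmin : 0 < γmin) (hγmax : 0 ≤ γmax)
    (hlam : 0 < lam) {δ : ℝ} (hδ : δ ≤ (q : ℝ) / (q + exp 1 * (γmax / γmin))) {i : ℕ} (hi : (i : ℝ) ≤ n * δ) :
    exp 1 * (γmax * i / (n * q * lam)) ≤ γmin / lam * (1 - i / n) := by
  have hn0 : (0 : ℝ) < n := by exact_mod_cast hn
  have hq0 : (0 : ℝ) < q := by exact_mod_cast hq
  have hδ' : δ * (q * γmin + exp 1 * γmax) ≤ q * γmin := by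
    rw [le_div_iff₀ (by positivity)] at hδ
    field_simp at hδ
    linarith
  have hcross : exp 1 * γmax * i ≤ q * γmin * (n - i) := by
    nlinarith [mul_le_mul_of_nonneg_left hi (by positivity : (0 : ℝ) ≤ q * γmin + exp 1 * γmax)]
  rw [show exp 1 * (γmax * i / (n * q * lam)) = exp 1 * γmax * i / (n * q * lam) by ring,
    show γmin / lam * (1 - i / n) = q * γmin * (n - i) / (n * q * lam) by field_simp,
    div_le_div_iff_of_pos_right (by positivity)]
  exact hcross

end Parameters

theorem return_probability_bound_general
    (n q : ℕ) (hn : 1 ≤ n) (hq : 1 ≤ q)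
    (γmin γmax lam δ : ℝ)
    (hγmin : 0 < γmin) (hγ : γmin ≤ γmax)
    (hlam : max γmax (γmin + γmax / (q : ℝ)) ≤ lam)
    (γstar : ℝ) (hγstar : γstar = γmax / γmin)
    (hδ : δ ≤ (q : ℝ) / (q + Real.exp 1 * γstar))
    (hnδ : 1 ≤ (n : ℝ) * δ)
    (r : ℕ) (hr : (r : ℝ) ≤ (⌊(n : ℝ) * δ⌋₊ : ℝ) / 2)
    (m : ℕ) :
    hitAndLowProb (bdMatrix n q γmin γmax lam) (⌊(n : ℝ) * δ⌋₊) r m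
      ≤ (m : ℝ) ^ 2 * Real.exp (-((n : ℝ) * δ / 2) + 1) := by
  subst hγstar
  set s := ⌊(n : ℝ) * δ⌋₊
  have hγmax : 0 ≤ γmax := hγmin.le.trans hγ
  have hlam' : γmin + γmax / q ≤ lam := (le_max_right _ _).trans hlam
  have hlam0 : 0 < lam := by
    have : 0 ≤ γmax / q := by positivity
    linarith
  have hs : (s : ℝ) ≤ n * δ := Nat.floor_le (by linarith)
  have hs1 : 1 ≤ s := Nat.le_floor (by simpa using hnδ)
  have hrs : r < s := by
    have : (1 : ℝ) ≤ s := by exact_mod_cast hs1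
    exact_mod_cast (show (r : ℝ) < s by linarith)
  have hdrift : ∀ i ≤ s, exp 1 * (γmax * i / (n * q * lam)) ≤ γmin / lam * (1 - i / n) :=
    fun i hi => bdMatrix_drift hn hq hγmin hγmax hlam0 hδ ((Nat.cast_le.mpr hi).trans hs)
  calc hitAndLowProb (bdMatrix n q γmin γmax lam) s r m
      ≤ m * exp ((r : ℝ) - s) := by
        rw [bdMatrix_eq_birthDeathMatrix]
        exact hitAndLowProb_birthDeathMatrix_le (bdMatrix_rates hγmin.le hγmax hlam0 hlam')
          hdrift hrs m
    _ ≤ (m : ℝ) ^ 2 * exp (-((n : ℝ) * δ / 2) + 1) := by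
        have hfloor : n * δ < s + 1 := Nat.lt_floor_add_one _
        gcongr
        · exact_mod_cast Nat.le_self_pow two_ne_zero m
        · linarith

/-- **Return probability bound after hitting `r★` (Lemma 7).**
If `0 < δ ≤ q/(q + e γ★)`, `nδ ≥ 1`, `r★ = ⌊nδ⌋` and `0 ≤ r ≤ ⌊nδ⌋/2`, then for every
`m ≥ 0`, `P(Ȳ_m ≤ r ∧ τ_{r★} ≤ m) ≤ m² exp(−nδ/2 + 1)`. -/
theorem return_probability_bound
    (n q : ℕ) (hn : 1 ≤ n) (hq : 1 ≤ q)
    (γmin γmax lam δ : ℝ)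
    (hγmin : 0 < γmin) (hγ : γmin ≤ γmax)
    (hlam : max γmax (γmin + γmax / (q : ℝ)) ≤ lam)
    (γstar : ℝ) (hγstar : γstar = γmax / γmin)
    (hδ0 : 0 < δ) (hδ : δ ≤ (q : ℝ) / (q + Real.exp 1 * γstar))
    (hnδ : 1 ≤ (n : ℝ) * δ)
    (r : ℕ) (hr : (r : ℝ) ≤ (⌊(n : ℝ) * δ⌋₊ : ℝ) / 2)
    (m : ℕ) :
    hitAndLowProb (bdMatrix n q γmin γmax lam) (⌊(n : ℝ) * δ⌋₊) r m
      ≤ (m : ℝ) ^ 2 * Real.exp (-((n : ℝ) * δ / 2) + 1) :=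
  return_probability_bound_general n q hn hq γmin γmax lam δ hγmin hγ hlam γstar hγstar hδ hnδ r hr
    m
end

section
/- Bound on the intermediate-regime likelihood terms (Lemma 8): Let A be a finite alphabet with |A| = a ≥ 2, q = a−1, 0 < γmin ≤ γmax, λ ≥ max(γmax, γmin + γmax/q), and Q̃ a rate matrix on A^n whose off-diagonal entries vanish when d_H(u,v) > 1, lie in [γmin, γmax] when d_H(u,v) = 1, and whose rows sum to zero; set R̃ = I + Q̃/(nqλ). Fix t > 0, define δ★(t) := min( t·q·γmin/(2t(γmax+q)+4), q/(q + e·γ★) ) with γ★ = γmax/γmin, and let x, y ∈ A^n with r := d_H(x,y) < ⌊n·δ★(t)⌋/2. Then for any integer p(n) ≥ ⌊nλtq/2⌋ + 1 and any T ≥ t, e^{−Tnqλ} · Σ_{m=⌊nλtq/2⌋+1}^{p(n)} (nTqλ)^m/m! · (R̃^m)_{x,y} ≤ exp(−t·n·q·λ·(1 − e^{−γmin/8})) + p(n)² · exp(−n·δ★(t)/2 + 1). Moreover, if t < t₀ := min(1/(γmax+q), q/(q + e·γ★)), then δ★(t) ≥ t·min(q·γmin/6, 1). -/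
/-!
The uniformized chain `R̃` is row stochastic and moves by at most one Hamming step. Take
`h v = exp (-d_H(v, y))`. At a point `u` with `d_H(u, y) ≤ n δ★ / 2`, at most `d_H(u, y)`
neighbours are closer to `y` while `(n - d_H(u, y)) q` are farther, and the choice of `δ★` makes
the drift negative: `(R̃ h)(u) ≤ (1 - ε) h(u)` with `ε = (1 - e⁻¹) γmin / (2λ)`. Farther out,
`(R̃ h)(u) ≤ e h(u) ≤ exp (1 - n δ★ / 2)`. Iterating,
`(R̃^m)_{x,y} ≤ (R̃^m h)(x) ≤ (1 - ε)^m + m exp (1 - n δ★ / 2)`, which is at most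
`p² exp (1 - n δ★ / 2)` as soon as `m > nλtq/2`. Since the Poisson weights sum to at most one,
the second summand of the bound alone already dominates the sum.
-/

open Finset Real Matrix

section Hamming
variable {ι α : Type*} [Fintype ι] [DecidableEq α]

theorem sum_sum_erase_ite_eq [Fintype α] (u y : ι → α) (A B : ℝ) :
    ∑ i, ∑ b ∈ univ.erase (u i), (if u i = y i then A else if b = y i then B else 0)
      = (Fintype.card ι - hammingDist u y) * (Fintype.card α - 1) * A + hammingDist u y * B := by
  have inner : ∀ i, ∑ b ∈ univ.erase (u i), (if u i = y i then A else if b = y i then B else 0)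
      = if u i = y i then (Fintype.card α - 1) * A else B := by
    intro i
    split_ifs with h
    · rw [sum_const, card_erase_of_mem (mem_univ _), card_univ, nsmul_eq_mul,
        Nat.cast_sub (Fintype.card_pos_iff.2 ⟨u i⟩), Nat.cast_one]
    · rw [sum_ite_eq']
      simp [Ne.symm h]
  have hcard := card_filter_add_card_filter_not (s := univ) (fun i => u i = y i)
  rw [card_univ] at hcard
  rw [sum_congr rfl fun i _ => inner i, sum_ite, sum_const, sum_const, nsmul_eq_mul, nsmul_eq_mul,
    hammingDist, ← hcard]
  push_cast
  ring

variable [DecidableEq ι]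

theorem hammingDist_update_add_ite (u y : ι → α) (i : ι) (b : α) :
    hammingDist (Function.update u i b) y + (if u i = y i then 0 else 1)
      = hammingDist u y + (if b = y i then 0 else 1) := by
  have split : ∀ w : ι → α, hammingDist w y
      = (if w i = y i then 0 else 1) + ∑ j ∈ univ.erase i, if w j = y j then 0 else 1 := by
    intro w
    rw [add_sum_erase _ (fun j => if w j = y j then 0 else 1) (mem_univ i)]
    simp only [hammingDist, card_filter, ite_not]
  have rest : ∑ j ∈ univ.erase i, (if Function.update u i b j = y j then 0 else 1)
      = ∑ j ∈ univ.erase i, if u j = y j then 0 else 1 :=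
    sum_congr rfl fun j hj => by rw [Function.update_of_ne (ne_of_mem_erase hj)]
  rw [split, split u, rest, Function.update_self]
  ring

theorem hammingDist_update_eq_one {u : ι → α} {i : ι} {b : α} (hb : b ≠ u i) :
    hammingDist u (Function.update u i b) = 1 := by
  have := hammingDist_update_add_ite u u i b
  simp only [hammingDist_self, if_neg hb] at this
  rw [hammingDist_comm]
  simpa using this

theorem exists_eq_update_of_hammingDist_eq_one_s15 {u v : ι → α} (h : hammingDist u v = 1) :
    ∃ i, v i ≠ u i ∧ v = Function.update u i (v i) := by
  obtain ⟨i, hi⟩ := card_eq_one.mp h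
  have hmem : ∀ j, u j ≠ v j ↔ j = i := fun j => by
    simpa using congrArg (j ∈ ·) hi
  refine ⟨i, fun h => (hmem i).2 rfl h.symm, funext fun j => ?_⟩
  by_cases hj : j = i
  · subst hj; simp
  · rw [Function.update_of_ne hj]
    exact (not_not.mp (mt (hmem j).1 hj)).symm

theorem mul_exp_neg_hammingDist_update_sub_le {u : ι → α} (y : ι → α) {i : ι} {b : α}
    (hb : b ≠ u i) {r lo hi : ℝ} (hlo : lo ≤ r) (hhi : r ≤ hi) :
    r * (exp (-hammingDist (Function.update u i b) y) - exp (-hammingDist u y))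
      ≤ exp (-hammingDist u y) * (1 - exp (-1))
        * (if u i = y i then -lo else if b = y i then exp 1 * hi else 0) := by
  have hd := hammingDist_update_add_ite u y i b
  have hE : 0 ≤ exp (-hammingDist u y) * (1 - exp (-1)) :=
    mul_nonneg (exp_pos _).le (sub_nonneg.2 (exp_le_one_iff.2 (by norm_num)))
  by_cases hu : u i = y i
  · have hy : b ≠ y i := hu ▸ hb
    simp only [hu, hy, if_true, if_false, add_zero] at hd ⊢
    have : exp (-hammingDist (Function.update u i b) y) = exp (-hammingDist u y) * exp (-1) := by
      rw [hd, ← exp_add]; push_cast; ring_nf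
    rw [this]
    nlinarith
  by_cases hy : b = y i
  · subst hy
    simp only [hu, if_true, if_false, add_zero] at hd ⊢
    have : exp (-hammingDist (Function.update u i (y i)) y) = exp (-hammingDist u y) * exp 1 := by
      rw [← hd, ← exp_add]; push_cast; ring_nf
    have hee : exp (-1) * exp 1 = 1 := by rw [← exp_add]; simp
    have hE' : 0 ≤ exp (-hammingDist u y) * exp 1 - exp (-hammingDist u y) := by
      nlinarith [one_le_exp zero_le_one, exp_pos (-(hammingDist u y : ℝ))]
    rw [this]
    linear_combination mul_le_mul_of_nonneg_right hhi hE' + exp (-hammingDist u y) * hi * hee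
  · simp only [hu, hy, if_false, add_left_inj] at hd ⊢
    simp [hd]

variable [Fintype α]

theorem update_injOn_sigma_erase (u : ι → α) :
    Set.InjOn (fun x : (_ : ι) × α => Function.update u x.1 x.2)
      (univ.sigma fun i => univ.erase (u i) : Finset _) := by
  rintro ⟨i, b⟩ hib ⟨j, c⟩ hjc h
  simp only [coe_sigma, Set.mem_sigma_iff, coe_univ, Set.mem_univ, coe_erase, Set.mem_sdiff,
    Set.mem_singleton_iff, true_and] at hib hjc h
  obtain rfl : i = j := by
    by_contra hij
    have := congrFun h i
    rw [Function.update_self, Function.update_of_ne hij] at this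
    exact hib this
  simpa using congrFun h i

theorem sum_eq_add_sum_sum_update {M : Type*} [AddCommMonoid M] (u : ι → α)
    (f : (ι → α) → M) (hf : ∀ v, 1 < hammingDist u v → f v = 0) :
    ∑ v, f v = f u + ∑ i, ∑ b ∈ univ.erase (u i), f (Function.update u i b) := by
  set S := univ.sigma fun i => univ.erase (u i)
  set φ := fun x : (_ : ι) × α => Function.update u x.1 x.2
  have hu : u ∉ S.image φ := by
    simp only [S, φ, mem_image, mem_sigma, mem_univ, mem_erase, true_and, not_exists, not_and]
    intro ⟨i, b⟩ hb h
    exact hb.1 (by simpa using congrFun h i)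
  have hsum : ∑ i, ∑ b ∈ univ.erase (u i), f (Function.update u i b) = ∑ v ∈ S.image φ, f v := by
    rw [sum_image (update_injOn_sigma_erase u), sum_sigma]
  rw [hsum, ← sum_insert hu]
  refine (sum_subset (subset_univ _) fun v _ hv => hf v ?_).symm
  by_contra! hle
  rcases Nat.le_one_iff_eq_zero_or_eq_one.mp hle with h0 | h1
  · exact hv (mem_insert.2 (Or.inl (hammingDist_eq_zero.mp h0).symm))
  · obtain ⟨i, hi, hv'⟩ := exists_eq_update_of_hammingDist_eq_one_s15 h1
    exact hv (mem_insert_of_mem (mem_image.2 ⟨⟨i, v i⟩, by simpa [S] using hi, hv'.symm⟩))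

theorem sum_mul_exp_neg_hammingDist_le {w : (ι → α) → ℝ} {u : ι → α} (y : ι → α) {lo hi : ℝ}
    (hw : ∑ v, w v = 1) (hsupp : ∀ v, 1 < hammingDist u v → w v = 0)
    (hlo : ∀ v, hammingDist u v = 1 → lo ≤ w v) (hhi : ∀ v, hammingDist u v = 1 → w v ≤ hi) :
    ∑ v, w v * exp (-hammingDist v y) ≤ exp (-hammingDist u y) * (1 + (1 - exp (-1)) *
      (hammingDist u y * exp 1 * hi
        - (Fintype.card ι - hammingDist u y) * (Fintype.card α - 1) * lo)) := by
  set h : (ι → α) → ℝ := fun v => exp (-hammingDist v y)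
  have hterm : ∀ i, ∀ b ∈ univ.erase (u i),
      w (Function.update u i b) * (h (Function.update u i b) - h u)
        ≤ h u * (1 - exp (-1)) * (if u i = y i then -lo else if b = y i then exp 1 * hi else 0) :=
    fun i b hb => mul_exp_neg_hammingDist_update_sub_le y (ne_of_mem_erase hb)
      (hlo _ (hammingDist_update_eq_one (ne_of_mem_erase hb)))
      (hhi _ (hammingDist_update_eq_one (ne_of_mem_erase hb)))
  calc ∑ v, w v * h v = h u + ∑ v, w v * (h v - h u) := by
        simp only [mul_sub, sum_sub_distrib, ← sum_mul, hw]; ring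
    _ = h u + (w u * (h u - h u) + ∑ i, ∑ b ∈ univ.erase (u i),
          w (Function.update u i b) * (h (Function.update u i b) - h u)) := by
        rw [sum_eq_add_sum_sum_update u _ fun v hv => by simp [hsupp v hv]]
    _ ≤ h u + (0 + ∑ i, ∑ b ∈ univ.erase (u i), h u * (1 - exp (-1))
          * (if u i = y i then -lo else if b = y i then exp 1 * hi else 0)) := by
        rw [sub_self, mul_zero]
        exact add_le_add le_rfl (add_le_add le_rfl (sum_le_sum fun i _ => sum_le_sum (hterm i)))
    _ = _ := by
        simp only [← mul_sum, sum_sum_erase_ite_eq, zero_add]; ring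

theorem sum_mul_exp_neg_hammingDist_le_exp_one_sub {w : (ι → α) → ℝ} {u : ι → α} (y : ι → α)
    (hw₀ : ∀ v, 0 ≤ w v) (hw : ∑ v, w v = 1) (hsupp : ∀ v, 1 < hammingDist u v → w v = 0) :
    ∑ v, w v * exp (-hammingDist v y) ≤ exp (1 - hammingDist u y) := by
  calc ∑ v, w v * exp (-hammingDist v y) ≤ ∑ v, w v * exp (1 - hammingDist u y) := by
        refine sum_le_sum fun v _ => ?_
        by_cases hv : 1 < hammingDist u v
        · simp [hsupp v hv]
        have htri : (hammingDist u y : ℝ) ≤ 1 + hammingDist v y := by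
          exact_mod_cast (hammingDist_triangle u v y).trans (by omega)
        gcongr
        · exact hw₀ v
        · linarith
    _ = exp (1 - hammingDist u y) := by rw [← sum_mul, hw, one_mul]

end Hamming

namespace Matrix
variable {n : Type*} [Fintype n]

theorem apply_le_mulVec_of_nonneg {M : Matrix n n ℝ} (hM : ∀ i j, 0 ≤ M i j) {g : n → ℝ}
    (hg : ∀ j, 0 ≤ g j) {j : n} (hgj : g j = 1) (i : n) : M i j ≤ (M *ᵥ g) i := by
  calc M i j = M i j * g j := by rw [hgj, mul_one]
    _ ≤ ∑ k, M i k * g k := single_le_sum (fun k _ => mul_nonneg (hM i k) (hg k)) (mem_univ j)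

variable [DecidableEq n]

theorem rowStochastic_pow_mulVec_le {P : Matrix n n ℝ} (hP : P ∈ rowStochastic ℝ n) {g : n → ℝ}
    {κ H : ℝ} (hκ₀ : 0 ≤ κ) (hκ₁ : κ ≤ 1) (hH : 0 ≤ H) (hg : ∀ u, (P *ᵥ g) u ≤ κ * g u + H)
    (m : ℕ) (u : n) : (P ^ m *ᵥ g) u ≤ κ ^ m * g u + m * H := by
  induction m generalizing u with
  | zero => simp
  | succ m ih =>
    have hPm : P ^ m ∈ rowStochastic ℝ n := pow_mem hP m
    calc (P ^ (m + 1) *ᵥ g) u = (P ^ m *ᵥ (P *ᵥ g)) u := by rw [pow_succ, mulVec_mulVec]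
      _ ≤ (P ^ m *ᵥ (κ • g + H • 1)) u :=
          sum_le_sum fun v _ => mul_le_mul_of_nonneg_left
            (by simpa [mulVec, dotProduct] using hg v) (nonneg_of_mem_rowStochastic hPm)
      _ = κ * (P ^ m *ᵥ g) u + H := by
          simp [mulVec_add, mulVec_smul, one_vecMul_of_mem_rowStochastic hPm]
      _ ≤ κ * (κ ^ m * g u + m * H) + H := by gcongr; exact ih u
      _ = κ ^ (m + 1) * g u + κ * (m * H) + H := by ring
      _ ≤ κ ^ (m + 1) * g u + (m + 1 : ℕ) * H := by
          have : κ * (m * H) ≤ m * H := mul_le_of_le_one_left (by positivity) hκ₁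
          push_cast; linarith

end Matrix

theorem exp_neg_mul_sum_pow_div_factorial_mul_le {s : Finset ℕ} {Λ B : ℝ} {b : ℕ → ℝ}
    (hΛ : 0 ≤ Λ) (hB : 0 ≤ B) (hb : ∀ m ∈ s, b m ≤ B) :
    exp (-Λ) * ∑ m ∈ s, Λ ^ m / m.factorial * b m ≤ B := by
  obtain ⟨N, hN⟩ := s.exists_nat_subset_range
  have hsum : ∑ m ∈ s, Λ ^ m / m.factorial ≤ exp Λ :=
    (sum_le_sum_of_subset_of_nonneg hN fun m _ _ => by positivity).trans
      (sum_le_exp_of_nonneg hΛ N)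
  calc exp (-Λ) * ∑ m ∈ s, Λ ^ m / m.factorial * b m
      ≤ exp (-Λ) * ((∑ m ∈ s, Λ ^ m / m.factorial) * B) := by
        rw [sum_mul]
        gcongr with m hm
        exact hb m hm
    _ ≤ exp (-Λ) * (exp Λ * B) := by gcongr
    _ = B := by rw [← mul_assoc, ← exp_add, neg_add_cancel, exp_zero, one_mul]

theorem one_sub_pow_mul_add_le {ε D g : ℝ} {m p : ℕ} (hε : ε ≤ 1) (hg : g ≤ 1)
    (hm : D / 2 ≤ ε * m) (hm₂ : 2 ≤ m) (hmp : m ≤ p) :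
    (1 - ε) ^ m * g + m * exp (-(D / 2) + 1) ≤ (p : ℝ) ^ 2 * exp (-(D / 2) + 1) := by
  have hdecay : (1 - ε) ^ m ≤ exp (-(D / 2) + 1) :=
    calc (1 - ε) ^ m ≤ exp (-ε) ^ m :=
          pow_le_pow_left₀ (by linarith) (by linarith [add_one_le_exp (-ε)]) m
      _ = exp (-(ε * m)) := by rw [← exp_nat_mul]; ring_nf
      _ ≤ exp (-(D / 2) + 1) := by gcongr; linarith
  have hp : (1 + m : ℝ) ≤ (p : ℝ) ^ 2 := by
    have : (2 : ℝ) ≤ m := by exact_mod_cast hm₂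
    have : (m : ℝ) ≤ p := by exact_mod_cast hmp
    nlinarith
  calc (1 - ε) ^ m * g + m * exp (-(D / 2) + 1)
      ≤ 1 * exp (-(D / 2) + 1) + m * exp (-(D / 2) + 1) := by
        rw [one_mul]
        exact add_le_add_left ((mul_le_of_le_one_right (pow_nonneg (by linarith) m) hg).trans
          hdecay) _
    _ ≤ (p : ℝ) ^ 2 * exp (-(D / 2) + 1) := by rw [← add_mul]; gcongr

noncomputable def driftRate (γmin lam : ℝ) : ℝ := (1 - exp (-1)) * γmin / (2 * lam)

theorem driftRate_nonneg {γmin lam : ℝ} (hγmin : 0 ≤ γmin) (hlam : 0 ≤ lam) :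
    0 ≤ driftRate γmin lam :=
  div_nonneg (mul_nonneg (sub_nonneg.2 (exp_le_one_iff.2 (by norm_num))) hγmin) (by positivity)

theorem driftRate_le_one {γmin lam : ℝ} (hγmin : 0 ≤ γmin) (hlam : γmin ≤ lam) :
    driftRate γmin lam ≤ 1 := by
  refine div_le_one_of_le₀ ?_ (by linarith)
  nlinarith [exp_pos (-1)]

theorem half_le_driftRate_mul {γmin lam N t q D : ℝ} {m : ℕ} (hγmin : 0 ≤ γmin) (hlam : 0 < lam)
    (hNtq : 0 ≤ t * N * q) (hD : 4 * D ≤ t * N * q * γmin) (hm : N * lam * t * q / 2 < m) :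
    D / 2 ≤ driftRate γmin lam * m := by
  have he : 1 / 2 ≤ 1 - exp (-1) := by linarith [exp_neg_one_lt_half]
  have hrate : 0 ≤ driftRate γmin lam := driftRate_nonneg hγmin hlam.le
  calc D / 2 ≤ 1 / 2 * (t * N * q * γmin) / 4 := by linarith
    _ ≤ (1 - exp (-1)) * (t * N * q * γmin) / 4 := by gcongr
    _ = driftRate γmin lam * (N * lam * t * q / 2) := by unfold driftRate; field_simp; ring
    _ ≤ driftRate γmin lam * m := by gcongr

theorem two_lt_of_mul_div_two_lt {γmin lam N t q D : ℝ} {m : ℕ} (hlam : γmin ≤ lam)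
    (hNtq : 0 ≤ t * N * q) (hD₁ : 1 ≤ D) (hD : 4 * D ≤ t * N * q * γmin)
    (hm : N * lam * t * q / 2 < m) : 2 < (m : ℝ) := by
  nlinarith [mul_le_mul_of_nonneg_left hlam hNtq]

theorem one_add_mul_sub_le_one_sub_driftRate {N q s D γmin γmax lam : ℝ} (hN : 0 < N)
    (hq : 0 < q) (hγmin : 0 ≤ γmin) (hγmax : 0 ≤ γmax) (hlam : 0 < lam) (hs : s ≤ D / 2)
    (hD : D * (q * γmin + exp 1 * γmax) ≤ N * q * γmin) :
    1 + (1 - exp (-1)) * (s * exp 1 * ((N * q * lam)⁻¹ * γmax)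
      - (N - s) * q * ((N * q * lam)⁻¹ * γmin)) ≤ 1 - driftRate γmin lam := by
  have hmargin : s * (q * γmin + exp 1 * γmax) ≤ N * q * γmin / 2 := by
    nlinarith [mul_le_mul_of_nonneg_right hs (by positivity : 0 ≤ q * γmin + exp 1 * γmax)]
  have hneg : s * exp 1 * ((N * q * lam)⁻¹ * γmax) - (N - s) * q * ((N * q * lam)⁻¹ * γmin)
      ≤ -(γmin / (2 * lam)) := by
    field_simp
    nlinarith
  have he : 0 ≤ 1 - exp (-1) := sub_nonneg.2 (exp_le_one_iff.2 (by norm_num))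
  rw [driftRate, mul_div_assoc]
  linarith [mul_le_mul_of_nonneg_left hneg he]

section Uniformization
variable {ι α : Type*} [Fintype ι] [DecidableEq α] {Q : Matrix (ι → α) (ι → α) ℝ} {γmin γmax c : ℝ}

theorem one_add_inv_smul_apply_of_hammingDist_eq_one {u v : ι → α} (h : hammingDist u v = 1) :
    (1 + c⁻¹ • Q) u v = c⁻¹ * Q u v := by
  have huv : u ≠ v := by rintro rfl; simp at h
  simp [one_apply_ne huv]

theorem one_add_inv_smul_apply_eq_zero (hQ : ∀ u v, u ≠ v → hammingDist u v ≠ 1 → Q u v = 0)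
    {u v : ι → α} (h : 1 < hammingDist u v) : (1 + c⁻¹ • Q) u v = 0 := by
  have huv : u ≠ v := by rintro rfl; simp at h
  simp [one_apply_ne huv, hQ u v huv h.ne']

variable [DecidableEq ι] [Fintype α]

theorem one_add_inv_smul_mem_rowStochastic
    (hQ₁ : ∀ u v, hammingDist u v = 1 → Q u v ∈ Set.Icc γmin γmax)
    (hQ₂ : ∀ u v, u ≠ v → hammingDist u v ≠ 1 → Q u v = 0) (hQ₃ : ∀ u, ∑ v, Q u v = 0)
    (hγmin : 0 ≤ γmin) (hc : 0 < c)
    (hcγ : Fintype.card ι * (Fintype.card α - 1) * γmax ≤ c) :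
    1 + c⁻¹ • Q ∈ rowStochastic ℝ (ι → α) := by
  refine mem_rowStochastic_iff_sum.2 ⟨fun u v => ?_, fun u => ?_⟩
  · rcases lt_trichotomy (hammingDist u v) 1 with h | h | h
    · obtain rfl := hammingDist_lt_one.1 h
      have hoff : ∑ i, ∑ b ∈ univ.erase (u i), Q u (Function.update u i b) ≤ c :=
        calc ∑ i, ∑ b ∈ univ.erase (u i), Q u (Function.update u i b)
            ≤ ∑ i, ∑ b ∈ univ.erase (u i), γmax :=
              sum_le_sum fun i _ => sum_le_sum fun b hb =>
                (hQ₁ _ _ (hammingDist_update_eq_one (ne_of_mem_erase hb))).2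
          _ = Fintype.card ι * (Fintype.card α - 1) * γmax := by
              simpa using sum_sum_erase_ite_eq u u γmax 0
          _ ≤ c := hcγ
      have hdiag : -c ≤ Q u u := by
        have := hQ₃ u
        rw [sum_eq_add_sum_sum_update u (Q u) fun v hv => hQ₂ u v
          (by rintro rfl; simp at hv) hv.ne'] at this
        linarith
      have := mul_le_mul_of_nonneg_left hdiag (inv_nonneg.2 hc.le)
      rw [mul_neg, inv_mul_cancel₀ hc.ne'] at this
      simp only [Matrix.add_apply, Matrix.smul_apply, one_apply_eq, smul_eq_mul]
      linarith
    · rw [one_add_inv_smul_apply_of_hammingDist_eq_one h]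
      exact mul_nonneg (inv_nonneg.2 hc.le) (hγmin.trans (hQ₁ u v h).1)
    · rw [one_add_inv_smul_apply_eq_zero hQ₂ h]
  · simp [Matrix.add_apply, sum_add_distrib, one_apply, ← mul_sum, hQ₃]

theorem one_add_inv_smul_mulVec_exp_neg_hammingDist_le
    (hQ₁ : ∀ u v, hammingDist u v = 1 → Q u v ∈ Set.Icc γmin γmax)
    (hQ₂ : ∀ u v, u ≠ v → hammingDist u v ≠ 1 → Q u v = 0) (hQ₃ : ∀ u, ∑ v, Q u v = 0)
    (hγmin : 0 < γmin) (hγ : γmin ≤ γmax) {lam : ℝ} (hlam : γmax ≤ lam)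
    (hN : 0 < Fintype.card ι) (hq : 0 < (Fintype.card α : ℝ) - 1)
    (hc : c = Fintype.card ι * (Fintype.card α - 1) * lam) {D : ℝ}
    (hD : D * ((Fintype.card α - 1) * γmin + exp 1 * γmax)
      ≤ Fintype.card ι * (Fintype.card α - 1) * γmin) (y u : ι → α) :
    ((1 + c⁻¹ • Q) *ᵥ fun v => exp (-hammingDist v y)) u
      ≤ (1 - driftRate γmin lam) * exp (-hammingDist u y) + exp (-(D / 2) + 1) := by
  have hlam₀ : 0 < lam := hγmin.trans_le (hγ.trans hlam)
  have hN' : (0 : ℝ) < Fintype.card ι := by exact_mod_cast hN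
  have hc₀ : 0 < c := hc ▸ mul_pos (mul_pos hN' hq) hlam₀
  have hR := one_add_inv_smul_mem_rowStochastic hQ₁ hQ₂ hQ₃ hγmin.le hc₀ (by rw [hc]; gcongr)
  by_cases hs : (hammingDist u y : ℝ) ≤ D / 2
  · have hcontr := sum_mul_exp_neg_hammingDist_le y (w := (1 + c⁻¹ • Q) u)
      (lo := c⁻¹ * γmin) (hi := c⁻¹ * γmax) (sum_row_of_mem_rowStochastic hR u)
      (fun v hv => one_add_inv_smul_apply_eq_zero hQ₂ hv)
      (fun v hv => by
        rw [one_add_inv_smul_apply_of_hammingDist_eq_one hv]; gcongr; exact (hQ₁ u v hv).1)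
      (fun v hv => by
        rw [one_add_inv_smul_apply_of_hammingDist_eq_one hv]; gcongr; exact (hQ₁ u v hv).2)
    have hrate := one_add_mul_sub_le_one_sub_driftRate hN' hq hγmin.le (hγmin.le.trans hγ) hlam₀
      hs hD
    calc _ ≤ exp (-hammingDist u y) * (1 - driftRate γmin lam) :=
          hcontr.trans (by gcongr; rw [hc]; exact hrate)
      _ ≤ _ := by nlinarith [exp_pos (-(D / 2) + 1)]
  · calc _ ≤ exp (1 - hammingDist u y) :=
          sum_mul_exp_neg_hammingDist_le_exp_one_sub y (fun v => nonneg_of_mem_rowStochastic hR)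
            (sum_row_of_mem_rowStochastic hR u) (fun v hv => one_add_inv_smul_apply_eq_zero hQ₂ hv)
      _ ≤ exp (-(D / 2) + 1) := by gcongr; linarith
      _ ≤ _ := le_add_of_nonneg_left (mul_nonneg
          (sub_nonneg.2 (driftRate_le_one hγmin.le (hγ.trans hlam))) (exp_pos _).le)

theorem one_add_inv_smul_pow_apply_le
    (hQ₁ : ∀ u v, hammingDist u v = 1 → Q u v ∈ Set.Icc γmin γmax)
    (hQ₂ : ∀ u v, u ≠ v → hammingDist u v ≠ 1 → Q u v = 0) (hQ₃ : ∀ u, ∑ v, Q u v = 0)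
    (hγmin : 0 < γmin) (hγ : γmin ≤ γmax) {lam t : ℝ} (hlam : γmax ≤ lam) (ht : 0 ≤ t)
    (hN : 0 < Fintype.card ι) (hq : 0 < (Fintype.card α : ℝ) - 1)
    (hc : c = Fintype.card ι * (Fintype.card α - 1) * lam) {D : ℝ} (hD₁ : 1 ≤ D)
    (hDt : 4 * D ≤ t * Fintype.card ι * (Fintype.card α - 1) * γmin)
    (hDe : D * ((Fintype.card α - 1) * γmin + exp 1 * γmax)
      ≤ Fintype.card ι * (Fintype.card α - 1) * γmin) {m p : ℕ}
    (hm : Fintype.card ι * lam * t * (Fintype.card α - 1) / 2 < m) (hmp : m ≤ p) (x y : ι → α) :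
    ((1 + c⁻¹ • Q) ^ m) x y ≤ (p : ℝ) ^ 2 * exp (-(D / 2) + 1) := by
  have hlam₀ : 0 < lam := hγmin.trans_le (hγ.trans hlam)
  have hc₀ : 0 < c := hc ▸ mul_pos (mul_pos (by exact_mod_cast hN) hq) hlam₀
  have hR := one_add_inv_smul_mem_rowStochastic hQ₁ hQ₂ hQ₃ hγmin.le hc₀ (by rw [hc]; gcongr)
  have htNq : 0 ≤ t * Fintype.card ι * (Fintype.card α - 1) := by positivity
  have hε₀ := driftRate_nonneg hγmin.le hlam₀.le
  have hε₁ := driftRate_le_one hγmin.le (hγ.trans hlam)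
  calc ((1 + c⁻¹ • Q) ^ m) x y ≤ ((1 + c⁻¹ • Q) ^ m *ᵥ fun v => exp (-hammingDist v y)) x := by
        refine apply_le_mulVec_of_nonneg (mem_rowStochastic.1 (pow_mem hR m)).1
          (fun _ => (exp_pos _).le) ?_ x
        simp
    _ ≤ (1 - driftRate γmin lam) ^ m * exp (-hammingDist x y) + m * exp (-(D / 2) + 1) :=
        rowStochastic_pow_mulVec_le hR (by linarith) (by linarith) (exp_pos _).le
          (one_add_inv_smul_mulVec_exp_neg_hammingDist_le hQ₁ hQ₂ hQ₃ hγmin hγ hlam hN hq hc hDe y)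
          m x
    _ ≤ (p : ℝ) ^ 2 * exp (-(D / 2) + 1) :=
        one_sub_pow_mul_add_le hε₁ (exp_le_one_iff.2 (by simp))
          (half_le_driftRate_mul hγmin.le hlam₀ htNq hDt hm)
          (by exact_mod_cast (two_lt_of_mul_div_two_lt (hγ.trans hlam) htNq hD₁ hDt hm).le) hmp

end Uniformization

theorem deltaStar_bounds {N δ t q γmin γmax : ℝ} (hN : 0 ≤ N) (hδ₀ : 0 ≤ δ) (ht : 0 ≤ t)
    (hq : 0 < q) (hγmin : 0 < γmin) (hγ : γmin ≤ γmax)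
    (hδ : δ = min (t * q * γmin / (2 * t * (γmax + q) + 4)) (q / (q + exp 1 * (γmax / γmin)))) :
    4 * (N * δ) ≤ t * N * q * γmin ∧ N * δ * (q * γmin + exp 1 * γmax) ≤ N * q * γmin := by
  have hγmax : 0 ≤ γmax := hγmin.le.trans hγ
  have h₁ : δ * (2 * t * (γmax + q) + 4) ≤ t * q * γmin :=
    (le_div_iff₀ (by positivity)).1 (hδ.le.trans (min_le_left _ _))
  have h₂ : δ * (q + exp 1 * (γmax / γmin)) ≤ q :=
    (le_div_iff₀ (by positivity)).1 (hδ.le.trans (min_le_right _ _))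
  have hsplit : q * γmin + exp 1 * γmax = (q + exp 1 * (γmax / γmin)) * γmin := by field_simp
  constructor
  · nlinarith [mul_nonneg hN (mul_nonneg hδ₀ (mul_nonneg ht (add_nonneg hγmax hq.le)))]
  · rw [hsplit]
    nlinarith [mul_le_mul_of_nonneg_left h₂ (mul_nonneg hN hγmin.le)]

theorem mul_min_le_min_of_lt {t q γmin γmax r : ℝ} (ht : 0 ≤ t) (hq : 0 ≤ q) (hγmin : 0 ≤ γmin)
    (hγq : 0 < γmax + q) (h : t < min (1 / (γmax + q)) r) :
    t * min (q * γmin / 6) 1 ≤ min (t * q * γmin / (2 * t * (γmax + q) + 4)) r := by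
  have ht₁ : t * (γmax + q) < 1 := (lt_div_iff₀ hγq).1 (lt_min_iff.1 h).1
  refine le_min ?_ ((mul_le_of_le_one_right ht (min_le_right _ _)).trans (lt_min_iff.1 h).2.le)
  calc t * min (q * γmin / 6) 1 ≤ t * (q * γmin / 6) := by gcongr; exact min_le_left _ _
    _ = t * q * γmin / 6 := by ring
    _ ≤ t * q * γmin / (2 * t * (γmax + q) + 4) :=
        div_le_div_of_nonneg_left (by positivity) (by positivity) (by linarith)

theorem intermediate_regime_bound_general
    (a n : ℕ) (ha : 2 ≤ a)
    (γmin γmax lam t : ℝ)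
    (hγmin : 0 < γmin) (hγ : γmin ≤ γmax)
    (hlam : max γmax (γmin + γmax / ((a : ℝ) - 1)) ≤ lam)
    (ht : 0 < t)
    (Q : Matrix (Fin n → Fin a) (Fin n → Fin a) ℝ)
    (hQ1 : ∀ u v : Fin n → Fin a, hammingDist u v = 1 → Q u v ∈ Set.Icc γmin γmax)
    (hQ2 : ∀ u v : Fin n → Fin a, u ≠ v → hammingDist u v ≠ 1 → Q u v = 0)
    (hQ3 : ∀ u : Fin n → Fin a, ∑ v, Q u v = 0)
    (R : Matrix (Fin n → Fin a) (Fin n → Fin a) ℝ)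
    (hR : R = 1 + (((n : ℝ) * ((a : ℝ) - 1) * lam))⁻¹ • Q)
    (γstar δstar : ℝ) (hγstar : γstar = γmax / γmin)
    (hδstar : δstar = min (t * ((a : ℝ) - 1) * γmin / (2 * t * (γmax + ((a : ℝ) - 1)) + 4))
      (((a : ℝ) - 1) / (((a : ℝ) - 1) + Real.exp 1 * γstar)))
    (x y : Fin n → Fin a)
    (hr : (hammingDist x y : ℝ) < (⌊(n : ℝ) * δstar⌋₊ : ℝ) / 2)
    (p : ℕ)
    (T : ℝ) (hT : t ≤ T) :
    (Real.exp (-(T * n * ((a : ℝ) - 1) * lam)) *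
        ∑ m ∈ Finset.Icc (⌊(n : ℝ) * lam * t * ((a : ℝ) - 1) / 2⌋₊ + 1) p,
          ((n : ℝ) * T * ((a : ℝ) - 1) * lam) ^ m / (Nat.factorial m) * (R ^ m) x y
      ≤ Real.exp (-(t * n * ((a : ℝ) - 1) * lam * (1 - Real.exp (-(γmin / 8)))))
        + (p : ℝ) ^ 2 * Real.exp (-((n : ℝ) * δstar / 2) + 1))
    ∧ (t < min (1 / (γmax + ((a : ℝ) - 1)))
          (((a : ℝ) - 1) / (((a : ℝ) - 1) + Real.exp 1 * γstar)) →
        t * min (((a : ℝ) - 1) * γmin / 6) 1 ≤ δstar) := by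
  subst hR hγstar
  have hq : (1 : ℝ) ≤ a - 1 := by linarith [(show (2 : ℝ) ≤ a by exact_mod_cast ha)]
  set q : ℝ := (a : ℝ) - 1
  have hcard : (Fintype.card (Fin n) : ℝ) = n ∧ (Fintype.card (Fin a) : ℝ) - 1 = q := by simp [q]
  have hlam' : γmax ≤ lam := (le_max_left _ _).trans hlam
  refine ⟨?_, fun h => hδstar ▸ mul_min_le_min_of_lt ht.le (by linarith) hγmin.le
    (by linarith) h⟩
  have hD : 1 ≤ (n : ℝ) * δstar := Nat.floor_pos.1 (by
    have : (0 : ℝ) < ⌊(n : ℝ) * δstar⌋₊ := by linarith [(hammingDist x y).cast_nonneg (α := ℝ)]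
    exact_mod_cast this)
  have hδ : 0 < δstar := pos_of_mul_pos_right (one_pos.trans_le hD) n.cast_nonneg
  have hn : 0 < n := by exact_mod_cast pos_of_mul_pos_left (one_pos.trans_le hD) hδ.le
  obtain ⟨hDt, hDe⟩ := deltaStar_bounds n.cast_nonneg hδ.le ht.le (by linarith) hγmin hγ hδstar
  have hterm : ∀ m ∈ Icc (⌊(n : ℝ) * lam * t * q / 2⌋₊ + 1) p,
      ((1 + ((n : ℝ) * q * lam)⁻¹ • Q) ^ m) x y
        ≤ (p : ℝ) ^ 2 * exp (-((n : ℝ) * δstar / 2) + 1) := by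
    intro m hm
    have hlt : (n : ℝ) * lam * t * q / 2 < m :=
      (Nat.lt_floor_add_one _).trans_le (by exact_mod_cast (mem_Icc.1 hm).1)
    refine one_add_inv_smul_pow_apply_le hQ1 hQ2 hQ3 hγmin hγ hlam' ht.le (by simpa using hn)
      ?_ ?_ hD ?_ ?_ ?_ (mem_Icc.1 hm).2 x y <;> simp only [hcard.1, hcard.2] <;> linarith
  have hΛ : 0 ≤ (n : ℝ) * T * q * lam := by
    have : 0 ≤ T := ht.le.trans hT
    have : 0 ≤ lam := hγmin.le.trans (hγ.trans hlam')
    have : 0 ≤ q := by linarith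
    positivity
  rw [show T * n * q * lam = n * T * q * lam by ring]
  exact (exp_neg_mul_sum_pow_div_factorial_mul_le hΛ (by positivity) hterm).trans
    (le_add_of_nonneg_left (exp_pos _).le)

/-- **Bound on the intermediate-regime likelihood terms (Lemma 8).**
With `R̃ = I + Q̃/(nqλ)`, `δ★(t) = min(tqγmin/(2t(γmax+q)+4), q/(q+eγ★))` and
`r = d_H(x,y) < ⌊nδ★(t)⌋/2`, for any integer `p ≥ ⌊nλtq/2⌋+1` and any `T ≥ t`,
`e^{−Tnqλ} Σ_{m=⌊nλtq/2⌋+1}^{p} (nTqλ)^m/m! (R̃^m)_{x,y}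
  ≤ exp(−tnqλ(1−e^{−γmin/8})) + p² exp(−nδ★(t)/2 + 1)`.
Moreover, if `t < t₀ = min(1/(γmax+q), q/(q+eγ★))` then `δ★(t) ≥ t·min(qγmin/6, 1)`. -/
theorem intermediate_regime_bound
    (a n : ℕ) (ha : 2 ≤ a) (hn : 1 ≤ n)
    (γmin γmax lam t : ℝ)
    (hγmin : 0 < γmin) (hγ : γmin ≤ γmax)
    (hlam : max γmax (γmin + γmax / ((a : ℝ) - 1)) ≤ lam)
    (ht : 0 < t)
    (Q : Matrix (Fin n → Fin a) (Fin n → Fin a) ℝ)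
    (hQ1 : ∀ u v : Fin n → Fin a, hammingDist u v = 1 → Q u v ∈ Set.Icc γmin γmax)
    (hQ2 : ∀ u v : Fin n → Fin a, u ≠ v → hammingDist u v ≠ 1 → Q u v = 0)
    (hQ3 : ∀ u : Fin n → Fin a, ∑ v, Q u v = 0)
    (R : Matrix (Fin n → Fin a) (Fin n → Fin a) ℝ)
    (hR : R = 1 + (((n : ℝ) * ((a : ℝ) - 1) * lam))⁻¹ • Q)
    (γstar δstar : ℝ) (hγstar : γstar = γmax / γmin)
    (hδstar : δstar = min (t * ((a : ℝ) - 1) * γmin / (2 * t * (γmax + ((a : ℝ) - 1)) + 4))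
      (((a : ℝ) - 1) / (((a : ℝ) - 1) + Real.exp 1 * γstar)))
    (x y : Fin n → Fin a)
    (hr : (hammingDist x y : ℝ) < (⌊(n : ℝ) * δstar⌋₊ : ℝ) / 2)
    (p : ℕ) (hp : ⌊(n : ℝ) * lam * t * ((a : ℝ) - 1) / 2⌋₊ + 1 ≤ p)
    (T : ℝ) (hT : t ≤ T) :
    (Real.exp (-(T * n * ((a : ℝ) - 1) * lam)) *
        ∑ m ∈ Finset.Icc (⌊(n : ℝ) * lam * t * ((a : ℝ) - 1) / 2⌋₊ + 1) p,
          ((n : ℝ) * T * ((a : ℝ) - 1) * lam) ^ m / (Nat.factorial m) * (R ^ m) x y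
      ≤ Real.exp (-(t * n * ((a : ℝ) - 1) * lam * (1 - Real.exp (-(γmin / 8)))))
        + (p : ℝ) ^ 2 * Real.exp (-((n : ℝ) * δstar / 2) + 1))
    ∧ (t < min (1 / (γmax + ((a : ℝ) - 1)))
          (((a : ℝ) - 1) / (((a : ℝ) - 1) + Real.exp 1 * γstar)) →
        t * min (((a : ℝ) - 1) * γmin / 6) 1 ≤ δstar) :=
  intermediate_regime_bound_general a n ha γmin γmax lam t hγmin hγ hlam ht Q hQ1 hQ2 hQ3 R hR γstar
    δstar hγstar hδstar x y hr p T hT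
end
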